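/- arXiv:1906.11187 — 10 statements merged into one kernel-verified Lean document; each statement's English description precedes it below -/
import Mathlib

section
/- For every real number α with α² < (4π)²·(8 − 4√3), there exist real numbers p, s, δ and γ such that: 1 < p ≤ 2 and p·α² < 2·(4π)²; −1 < s < −max(α²(p−1)/(4π)², p−1); 0 < δ < s + 1; 0 < γ < 1; and the following three inequalities hold: (2 + s − δ)·(p − 1)/p + s > 0; (s + 1)/(1 − δ) < γ; and (1 − (s + 1)·p/4)·γ < p − 1. -/
open Real

set_option maxHeartbeats 1000000

/-- Exponent-feasibility lemma for the elliptic SPDE with exponential nonlinearity: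
for every `α` with `α² < (4π)²(8 - 4√3)` there exist admissible exponents `p, s, δ, γ`. -/
theorem exponent_feasibility (α : ℝ) (hα : α ^ 2 < (4 * π) ^ 2 * (8 - 4 * Real.sqrt 3)) :
    ∃ p s δ γ : ℝ,
      1 < p ∧ p ≤ 2 ∧ p * α ^ 2 < 2 * (4 * π) ^ 2 ∧
      -1 < s ∧ s < -max (α ^ 2 * (p - 1) / (4 * π) ^ 2) (p - 1) ∧
      0 < δ ∧ δ < s + 1 ∧
      0 < γ ∧ γ < 1 ∧
      (2 + s - δ) * (p - 1) / p + s > 0 ∧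
      (s + 1) / (1 - δ) < γ ∧
      (1 - (s + 1) * p / 4) * γ < p - 1 := by
  set s3 : ℝ := Real.sqrt 3 with hs3def
  have hs3 : s3 ^ 2 = 3 := Real.sq_sqrt (by norm_num)
  have hs3nn : 0 ≤ s3 := Real.sqrt_nonneg 3
  clear_value s3
  have h3l : (173 : ℝ)/100 < s3 := by nlinarith
  have h3u : s3 < (174 : ℝ)/100 := by nlinarith
  have hπ0 : (0:ℝ) < 4 * π := by positivity
  have hπ : (0:ℝ) < (4 * π) ^ 2 := pow_pos hπ0 2
  set t : ℝ := α ^ 2 / (4 * π) ^ 2 with htdef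
  have ht0 : 0 ≤ t := by rw [htdef]; positivity
  clear_value t
  have ht : t < 8 - 4 * s3 := by
    rw [htdef, div_lt_iff₀ hπ]; linarith
  have hαt : α ^ 2 = t * (4 * π) ^ 2 := by
    rw [htdef]; field_simp
  set τ : ℝ := max t 1 with hτdef
  have hτ1 : 1 ≤ τ := le_max_right _ _
  have hτt : t ≤ τ := le_max_left _ _
  have hτT : τ < 8 - 4 * s3 := max_lt ht (by nlinarith)
  clear_value τ
  have hτu : τ ≤ 27/25 := by nlinarith
  have hτ0 : (0:ℝ) < τ := lt_of_lt_of_le one_pos hτ1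
  have hT : 0 < 8 - 4 * s3 - τ := by linarith
  set q : ℝ := (8 - 3 * s3 - τ) / 4 with hqdef
  set u : ℝ := (2 * τ ^ 2 + 6 * s3 * τ - 15 * τ + 4 * s3) / 8 with hudef
  clear_value q u
  have hq0 : 0 < q := by
    rw [hqdef]; apply div_pos (by nlinarith) (by norm_num)
  have hq1 : q ≤ 1 := by
    rw [hqdef, div_le_one (by norm_num : (0:ℝ) < 4)]; nlinarith
  have hu0 : 0 < u := by
    rw [hudef]; apply div_pos (by nlinarith) (by norm_num)
  have hu1 : u < 1 := by
    rw [hudef, div_lt_one (by norm_num : (0:ℝ) < 8)]; nlinarith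
  have huR : u < 1 - τ * q := by
    have hRu : 1 - τ * q - u = (8 - 4 * s3 - τ) / 8 := by
      rw [hqdef, hudef]; ring
    nlinarith [hRu, hT]
  -- M2 = u(2q+1) - 1 > 0
  have hG1 : 0 < (4 + 7 * s3) + (4 * s3 - 19) * τ + 2 * τ ^ 2 := by
    nlinarith [mul_nonneg (sub_nonneg.2 hτ1) (sub_nonneg.2 hτu)]
  have hM2id : (u * (2 * q + 1) - 1) * 16
      = (8 - 4 * s3 - τ) * ((4 + 7 * s3) + (4 * s3 - 19) * τ + 2 * τ ^ 2) := by
    rw [hqdef, hudef]; linear_combination (16 - 2 * τ) * hs3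
  have hM2pos : 0 < u * (2 * q + 1) - 1 := by
    nlinarith [mul_pos hT hG1, hM2id]
  -- M1 = q - u + u^2(1+q)/4 > 0
  have hG2 : 0 < (244 - 56 * s3) + (312 - 181 * s3) * τ + (421 - 168 * s3) * τ ^ 2
      + (-76 + 20 * s3) * τ ^ 3 + 4 * τ ^ 4 := by
    nlinarith [mul_nonneg (sub_nonneg.2 hτ1) (sub_nonneg.2 hτu), sq_nonneg (τ - 1),
      mul_pos hτ0 hτ0, pow_pos hτ0 3, pow_pos hτ0 4,
      mul_le_mul_of_nonneg_left hτu hs3nn]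
  have hM1id : (q - u + u ^ 2 * (1 + q) / 4) * 1024
      = (8 - 4 * s3 - τ) * ((244 - 56 * s3) + (312 - 181 * s3) * τ + (421 - 168 * s3) * τ ^ 2
      + (-76 + 20 * s3) * τ ^ 3 + 4 * τ ^ 4) := by
    rw [hqdef, hudef]
    linear_combination (-32 - 48 * s3 + (196 - 144 * s3) * τ + (204 - 108 * s3) * τ ^ 2
      - 28 * τ ^ 3) * hs3
  have hM1pos : 0 < q - u + u ^ 2 * (1 + q) / 4 := by
    nlinarith [mul_pos hT hG2, hM1id]
  -- choose δ
  set M1 : ℝ := q - u + u ^ 2 * (1 + q) / 4 with hM1def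
  set M2 : ℝ := u * (2 * q + 1) - 1 with hM2def
  clear_value M1 M2
  set δ : ℝ := min (min (M1 / q) (M2 / q)) (min u (1 - u)) / 2 with hδdef
  have hu1' : 0 < 1 - u := by linarith
  clear_value δ
  have hδ0 : 0 < δ := by
    rw [hδdef]
    apply div_pos _ two_pos
    exact lt_min (lt_min (div_pos hM1pos hq0) (div_pos hM2pos hq0)) (lt_min hu0 hu1')
  have hδu : δ < u := by
    have h1 : δ ≤ u / 2 := by
      rw [hδdef]
      have : min (min (M1 / q) (M2 / q)) (min u (1 - u)) ≤ u :=
        le_trans (min_le_right _ _) (min_le_left _ _)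
      linarith
    linarith
  have hδ1u : δ < 1 - u := by
    have h1 : δ ≤ (1 - u) / 2 := by
      rw [hδdef]
      have : min (min (M1 / q) (M2 / q)) (min u (1 - u)) ≤ 1 - u :=
        le_trans (min_le_right _ _) (min_le_right _ _)
      linarith
    linarith
  have hδM1 : δ * q < M1 := by
    have h1 : δ < M1 / q := by
      have h2 : δ ≤ (M1 / q) / 2 := by
        rw [hδdef]
        have : min (min (M1 / q) (M2 / q)) (min u (1 - u)) ≤ M1 / q :=
          le_trans (min_le_left _ _) (min_le_left _ _)
        linarith
      have h3 : 0 < M1 / q := div_pos hM1pos hq0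
      linarith
    exact (lt_div_iff₀ hq0).1 h1
  have hδM2 : δ * q < M2 := by
    have h1 : δ < M2 / q := by
      have h2 : δ ≤ (M2 / q) / 2 := by
        rw [hδdef]
        have : min (min (M1 / q) (M2 / q)) (min u (1 - u)) ≤ M2 / q :=
          le_trans (min_le_left _ _) (min_le_right _ _)
        linarith
      have h3 : 0 < M2 / q := div_pos hM2pos hq0
      linarith
    exact (lt_div_iff₀ hq0).1 h1
  -- choose γ
  have hw : 0 < 1 - u * (1 + q) / 4 := by
    nlinarith [mul_pos hu1' (show (0:ℝ) < 1 + q by linarith)]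
  have h1δ : 0 < 1 - δ := by linarith
  have hx1 : u / (1 - δ) < 1 := (div_lt_one h1δ).2 (by linarith)
  have hxqw : u / (1 - δ) < q / (1 - u * (1 + q) / 4) := by
    rw [div_lt_div_iff₀ h1δ hw]
    have hδM1x : δ * q < q - u + u ^ 2 * (1 + q) / 4 := by rw [hM1def] at hδM1; exact hδM1
    nlinarith [hδM1x]
  set γ : ℝ := (u / (1 - δ) + min 1 (q / (1 - u * (1 + q) / 4))) / 2 with hγdef
  clear_value γ
  have hxmin : u / (1 - δ) < min 1 (q / (1 - u * (1 + q) / 4)) := lt_min hx1 hxqw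
  have hγx : u / (1 - δ) < γ := by rw [hγdef]; linarith
  have hγm : γ < min 1 (q / (1 - u * (1 + q) / 4)) := by rw [hγdef]; linarith
  have hγ1 : γ < 1 := lt_of_lt_of_le hγm (min_le_left _ _)
  have hγqw : γ < q / (1 - u * (1 + q) / 4) := lt_of_lt_of_le hγm (min_le_right _ _)
  have hγ0 : 0 < γ := by
    have hx0 : 0 < u / (1 - δ) := div_pos hu0 h1δ
    linarith
  -- assemble
  refine ⟨1 + q, u - 1, δ, γ, by linarith, by linarith, ?_, by linarith, ?_, hδ0,
    by linarith, hγ0, hγ1, ?_, ?_, ?_⟩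
  · -- (1+q) * α² < 2 (4π)²
    have h2 : (1 + q) * t < 2 := by
      have hle : (1 + q) * t ≤ (1 + q) * τ :=
        mul_le_mul_of_nonneg_left hτt (by linarith)
      have hlt : (1 + q) * τ < 2 := by
        rw [hqdef]
        linarith [mul_le_mul h3l.le hτ1 zero_le_one hs3nn,
          mul_le_mul hτ1 hτ1 zero_le_one (le_trans zero_le_one hτ1)]
      linarith
    rw [hαt]
    linarith [mul_lt_mul_of_pos_right h2 hπ]
  · -- s < -max ...
    have hmax : max (α ^ 2 * (1 + q - 1) / (4 * π) ^ 2) (1 + q - 1) ≤ τ * q := by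
      apply max_le
      · have he : α ^ 2 * (1 + q - 1) / (4 * π) ^ 2 = t * q := by
          rw [htdef]; ring
        rw [he]
        exact mul_le_mul_of_nonneg_right hτt hq0.le
      · have he : (1:ℝ) + q - 1 = q := by ring
        rw [he]; linarith [mul_le_mul_of_nonneg_right hτ1 hq0.le]
    linarith [huR, hmax]
  · -- A
    have hp0 : (0:ℝ) < 1 + q := by linarith
    have hid : (2 + (u - 1) - δ) * (1 + q - 1) / (1 + q) + (u - 1)
        = (u * (2 * q + 1) - 1 - δ * q) / (1 + q) := by
      field_simp; ring
    rw [gt_iff_lt, hid]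
    exact div_pos (by rw [hM2def] at hδM2; linarith) hp0
  · -- B
    have he : u - 1 + 1 = u := by ring
    rw [he]; exact hγx
  · -- C
    have he : 1 - (u - 1 + 1) * (1 + q) / 4 = 1 - u * (1 + q) / 4 := by ring
    have he2 : (1:ℝ) + q - 1 = q := by ring
    rw [he, he2]
    have := (lt_div_iff₀ hw).1 hγqw
    linarith [this]
end

section
/- Let δ, Z, k be real numbers with 0 < δ < 1, δ/2 < Z < 1 and 0 < k < 1. Then the two inequalities Z/(1 − δ) < k/(1 − (Z/4)·(k + 1)) and (1 + Z − δ)·k/(k + 1) > 1 − Z hold simultaneously if and only if k > max( Z(4 − Z)/(Z² + 4(1 − δ)), (1 − Z)/(2Z − δ) ). (Note that under the stated constraints the denominators 1 − (Z/4)(k+1), Z² + 4(1 − δ) and 2Z − δ are all strictly positive.) -/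
/-- Change-of-variables reformulation (`Z = 1 + s`, `k = p - 1`) of the exponent-feasibility
conditions: the two inequalities hold simultaneously iff `k` exceeds the threshold
`G(Z, δ) = max( Z(4-Z)/(Z² + 4(1-δ)), (1-Z)/(2Z-δ) )`. -/
theorem feasibility_change_of_variables (δ Z k : ℝ)
    (hδ0 : 0 < δ) (hδ1 : δ < 1) (hZ0 : δ / 2 < Z) (hZ1 : Z < 1)
    (hk0 : 0 < k) (hk1 : k < 1) :
    (Z / (1 - δ) < k / (1 - Z / 4 * (k + 1)) ∧ (1 + Z - δ) * k / (k + 1) > 1 - Z) ↔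
      k > max (Z * (4 - Z) / (Z ^ 2 + 4 * (1 - δ))) ((1 - Z) / (2 * Z - δ)) := by
  have hZpos : 0 < Z := lt_of_le_of_lt (by linarith) hZ0
  have hd1 : (0:ℝ) < 1 - Z / 4 * (k + 1) := by nlinarith
  have hd2 : (0:ℝ) < 1 - δ := by linarith
  have hd3 : (0:ℝ) < Z ^ 2 + 4 * (1 - δ) := by nlinarith
  have hd4 : (0:ℝ) < 2 * Z - δ := by linarith
  have hk1' : (0:ℝ) < k + 1 := by linarith
  rw [gt_iff_lt, gt_iff_lt, max_lt_iff, div_lt_div_iff₀ hd2 hd1, lt_div_iff₀ hk1',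
    div_lt_iff₀ hd3, div_lt_iff₀ hd4]
  constructor
  · rintro ⟨h1, h2⟩
    constructor <;> nlinarith
  · rintro ⟨h1, h2⟩
    constructor <;> nlinarith
end

section
/- Define, for real numbers δ and Z with 0 < δ < 1 and δ/2 < Z < 1, the quantity G(Z, δ) := max( Z(4 − Z)/(Z² + 4(1 − δ)), (1 − Z)/(2Z − δ) ). Then the supremum of (1 − Z)/G(Z, δ) over all pairs (Z, δ) with 0 < δ < 1 and δ/2 < Z < 1 equals 8 − 4√3. -/
private lemma sqrt3_facts : (Real.sqrt 3) ^ 2 = 3 ∧ 1.7 < Real.sqrt 3 ∧ Real.sqrt 3 < 1.75 := by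
  have h : (Real.sqrt 3) ^ 2 = 3 := Real.sq_sqrt (by norm_num)
  have h0 : 0 ≤ Real.sqrt 3 := Real.sqrt_nonneg _
  refine ⟨h, by nlinarith, by nlinarith⟩

set_option maxHeartbeats 1000000 in
/-- The supremum of `(1 - Z)/G(Z, δ)` over `0 < δ < 1`, `δ/2 < Z < 1`, where
`G(Z, δ) = max( Z(4-Z)/(Z² + 4(1-δ)), (1-Z)/(2Z-δ) )`, equals `8 - 4√3`;
this identifies the maximal admissible value of `α²/(4π)²`. -/
theorem sup_feasibility_threshold :
    sSup {r : ℝ | ∃ Z δ : ℝ, 0 < δ ∧ δ < 1 ∧ δ / 2 < Z ∧ Z < 1 ∧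
        r = (1 - Z) /
          max (Z * (4 - Z) / (Z ^ 2 + 4 * (1 - δ))) ((1 - Z) / (2 * Z - δ))} =
      8 - 4 * Real.sqrt 3 := by
  obtain ⟨hs, hs1, hs2⟩ := sqrt3_facts
  set s := Real.sqrt 3 with hsdef
  set S := {r : ℝ | ∃ Z δ : ℝ, 0 < δ ∧ δ < 1 ∧ δ / 2 < Z ∧ Z < 1 ∧
        r = (1 - Z) /
          max (Z * (4 - Z) / (Z ^ 2 + 4 * (1 - δ))) ((1 - Z) / (2 * Z - δ))} with hS
  -- membership: for 0 < δ < 1, (8 - 4s) - δ ∈ S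
  have hmem : ∀ δ : ℝ, 0 < δ → δ < 1 → (8 - 4 * s) - δ ∈ S := by
    intro δ hδ0 hδ1
    refine ⟨4 - 2 * s, δ, hδ0, hδ1, by nlinarith, by nlinarith, ?_⟩
    set Z : ℝ := 4 - 2 * s with hZ
    have hden1 : Z ^ 2 + 4 * (1 - δ) > 0 := by nlinarith
    have hden2 : 2 * Z - δ > 0 := by nlinarith
    have h1Z : (1 : ℝ) - Z > 0 := by nlinarith
    have hAB : Z * (4 - Z) / (Z ^ 2 + 4 * (1 - δ)) = (1 - Z) / (2 * Z - δ) := by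
      rw [div_eq_div_iff (by linarith) (by linarith)]
      simp only [hZ]
      linear_combination (8 * s - 20 + 4 * δ) * hs
    rw [hAB, max_self, div_div_eq_mul_div, mul_comm (1 - Z) (2 * Z - δ), mul_div_assoc,
      div_self (ne_of_gt h1Z), mul_one]
    simp only [hZ]; ring
  -- upper bound
  have hub : ∀ r ∈ S, r ≤ 8 - 4 * s := by
    rintro r ⟨Z, δ, hδ0, hδ1, hZδ, hZ1, rfl⟩
    have hZ0 : 0 < Z := by linarith
    have h1Z : (0 : ℝ) < 1 - Z := by linarith
    have hden1 : (0 : ℝ) < Z ^ 2 + 4 * (1 - δ) := by nlinarith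
    have hden2 : (0 : ℝ) < 2 * Z - δ := by linarith
    have hnum : (0 : ℝ) < Z * (4 - Z) := by nlinarith
    have hA : (0 : ℝ) < Z * (4 - Z) / (Z ^ 2 + 4 * (1 - δ)) := div_pos hnum hden1
    have hB : (0 : ℝ) < (1 - Z) / (2 * Z - δ) := div_pos h1Z hden2
    rcases le_or_gt Z (4 - 2 * s) with hZle | hZgt
    · -- use B branch
      have h1 : (1 - Z) / max (Z * (4 - Z) / (Z ^ 2 + 4 * (1 - δ))) ((1 - Z) / (2 * Z - δ))
          ≤ (1 - Z) / ((1 - Z) / (2 * Z - δ)) :=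
        div_le_div_of_nonneg_left h1Z.le hB (le_max_right _ _)
      have h2 : (1 - Z) / ((1 - Z) / (2 * Z - δ)) = 2 * Z - δ := by
        rw [div_div_eq_mul_div, mul_comm (1 - Z) (2 * Z - δ), mul_div_assoc,
          div_self (ne_of_gt h1Z), mul_one]
      rw [h2] at h1
      linarith
    · -- use A branch
      have h1 : (1 - Z) / max (Z * (4 - Z) / (Z ^ 2 + 4 * (1 - δ))) ((1 - Z) / (2 * Z - δ))
          ≤ (1 - Z) / (Z * (4 - Z) / (Z ^ 2 + 4 * (1 - δ))) :=
        div_le_div_of_nonneg_left h1Z.le hA (le_max_left _ _)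
      have h2 : (1 - Z) / (Z * (4 - Z) / (Z ^ 2 + 4 * (1 - δ))) ≤ 8 - 4 * s := by
        rw [div_div_eq_mul_div, div_le_iff₀ hnum]
        have hquad : 0 ≤ Z ^ 2 + (2 * s - 5) * Z + 4 + 2 * s := by
          nlinarith [sq_nonneg (2 * Z + 2 * s - 5)]
        nlinarith [mul_nonneg (by linarith : (0:ℝ) ≤ Z - (4 - 2 * s)) hquad,
          mul_nonneg (mul_nonneg hδ0.le h1Z.le) (by linarith : (0:ℝ) ≤ (8 : ℝ) - 4 * s)]
      linarith
  have hne : S.Nonempty := ⟨(8 - 4 * s) - 1/2, hmem (1/2) (by norm_num) (by norm_num)⟩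
  have hbdd : BddAbove S := ⟨8 - 4 * s, hub⟩
  refine le_antisymm (csSup_le hne hub) ?_
  refine le_of_forall_lt fun w hw => ?_
  set δ : ℝ := min ((8 - 4 * s - w) / 2) (1/2) with hδ
  have hδ0 : 0 < δ := lt_min (by linarith) (by norm_num)
  have hδ1 : δ < 1 := lt_of_le_of_lt (min_le_right _ _) (by norm_num)
  have hwlt : w < (8 - 4 * s) - δ := by
    have : δ ≤ (8 - 4 * s - w) / 2 := min_le_left _ _
    linarith
  exact lt_of_lt_of_le hwlt (le_csSup hbdd (hmem δ hδ0 hδ1))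
end

section
/- Let X be a metric space, let μ be a Borel probability measure on X, let T and T_i (i ∈ ℕ) be continuous maps from X to X, and let ν and ν_i (i ∈ ℕ) be Borel probability measures on X. Assume: (i) the pushforward of ν_i under T_i equals μ for every i; (ii) ν_i converges weakly to ν as i → ∞; (iii) the family (ν_i) is uniformly tight (for every ε > 0 there is a compact K ⊆ X with ν_i(K) ≥ 1 − ε for all i); and (iv) T_i converges to T uniformly on every compact subset of X. Then the pushforward of ν under T equals μ. -/
/-!
For bounded continuous `g`, `∫ g ∘ T_i ∂ν_i = ∫ g ∂μ` for every `i`. Tightness gives a compact `K`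
carrying all but `ε` of every `ν_i`; on `K` we have `g ∘ T_i → g ∘ T` uniformly, and off `K` the
difference is bounded by `2‖g‖`, so `∫ g ∘ T_i ∂ν_i - ∫ g ∘ T ∂ν_i → 0`. Together with `ν_i → ν`
this shows `T_{i*} ν_i → T_* ν` weakly, and this limit is the constant `μ`.
-/

open MeasureTheory Filter Set Topology

theorem Continuous.comp_tendstoUniformlyOn_of_isCompact_image
    {α β γ ι : Type*} [UniformSpace β] [UniformSpace γ] {p : Filter ι} {K : Set α}
    {F : ι → α → β} {f : α → β} {g : β → γ} (hg : Continuous g) (hfK : IsCompact (f '' K))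
    (h : TendstoUniformlyOn F f p K) :
    TendstoUniformlyOn (fun i x => g (F i x)) (fun x => g (f x)) p K := by
  intro u hu
  -- `F i x` need not lie in `f '' K`, but `g` is uniformly continuous *at* that compact set.
  have hnear := hfK.uniformContinuousAt_of_continuousAt g (fun y _ => hg.continuousAt) hu
  filter_upwards [h _ hnear] with i hi x hx
  exact hi x hx (mem_image_of_mem f hx)

section Tight

variable {X E : Type*} [MeasurableSpace X] [NormedAddCommGroup E] [NormedSpace ℝ E]

theorem norm_integral_le_of_norm_le_on_of_norm_le {μ : Measure X} [IsFiniteMeasure μ]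
    {f : X → E} {K : Set X} {η C : ℝ} (hK : MeasurableSet K) (hf : AEStronglyMeasurable f μ)
    (hfK : ∀ x ∈ K, ‖f x‖ ≤ η) (hfC : ∀ x, ‖f x‖ ≤ C) :
    ‖∫ x, f x ∂μ‖ ≤ η * μ.real K + C * μ.real Kᶜ := by
  have hint : Integrable f μ := .of_bound hf C (.of_forall hfC)
  rw [← integral_add_compl hK hint]
  exact (norm_add_le _ _).trans <| add_le_add
    (norm_setIntegral_le_of_norm_le_const (measure_lt_top μ K) hfK)
    (norm_setIntegral_le_of_norm_le_const (measure_lt_top μ Kᶜ) fun x _ => hfC x)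

variable [TopologicalSpace X] [T2Space X] [OpensMeasurableSpace X]

theorem tendsto_integral_sub_of_tendstoUniformlyOn_isCompact {ι : Type*} {l : Filter ι}
    {μs : ι → Measure X} [∀ i, IsProbabilityMeasure (μs i)]
    (htight : IsTightMeasureSet (range μs)) {F : ι → X → E} {f : X → E} {C : ℝ}
    (hmeas : ∀ i, AEStronglyMeasurable (fun x => F i x - f x) (μs i))
    (hbound : ∀ i x, ‖F i x - f x‖ ≤ C)
    (hunif : ∀ K, IsCompact K → TendstoUniformlyOn F f l K) :
    Tendsto (fun i => ∫ x, F i x - f x ∂μs i) l (𝓝 0) := by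
  rw [Metric.tendsto_nhds]
  intro ε hε
  set δ := ε / (2 * (|C| + 1))
  have hδ : 0 < δ := by positivity
  obtain ⟨K, hK, hKc⟩ := isTightMeasureSet_iff_exists_isCompact_measure_compl_le.1 htight
    (ENNReal.ofReal δ) (by simpa using hδ)
  filter_upwards [Metric.tendstoUniformlyOn_iff.1 (hunif K hK) (ε / 2) (half_pos hε)] with i hi
  have hKc_real : (μs i).real Kᶜ ≤ δ :=
    ENNReal.toReal_le_of_le_ofReal hδ.le (hKc _ (mem_range_self i))
  have hCδ : C * (μs i).real Kᶜ < ε / 2 := calc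
    C * (μs i).real Kᶜ ≤ |C| * δ :=
      (mul_le_mul_of_nonneg_right (le_abs_self C) measureReal_nonneg).trans
        (mul_le_mul_of_nonneg_left hKc_real (abs_nonneg C))
    _ < ε / 2 := by
      have : |C| < |C| + 1 := lt_add_one _
      simp only [δ]
      rw [mul_div_assoc', div_lt_div_iff₀ (by positivity) two_pos]
      nlinarith
  rw [dist_zero_right]
  calc ‖∫ x, F i x - f x ∂μs i‖
      ≤ ε / 2 * (μs i).real K + C * (μs i).real Kᶜ :=
        norm_integral_le_of_norm_le_on_of_norm_le hK.measurableSet (hmeas i)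
          (fun x hx => by rw [← dist_eq_norm, dist_comm]; exact (hi x hx).le) (hbound i)
    _ < ε := by
      have : (μs i).real K ≤ 1 := measureReal_le_one
      nlinarith

end Tight

theorem isTightMeasureSet_range_of_forall_exists_isCompact_one_sub_le {X ι : Type*}
    [TopologicalSpace X] [T2Space X] [MeasurableSpace X] [OpensMeasurableSpace X]
    {μs : ι → Measure X} [∀ i, IsProbabilityMeasure (μs i)]
    (h : ∀ ε : ℝ, 0 < ε → ∃ K : Set X, IsCompact K ∧ ∀ i, 1 - ENNReal.ofReal ε ≤ μs i K) :
    IsTightMeasureSet (range μs) := by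
  rw [isTightMeasureSet_iff_exists_isCompact_measure_compl_le]
  intro ε hε
  obtain ⟨K, hK, hKi⟩ := h (min ε 1).toReal (ENNReal.toReal_pos (by simp [hε.ne']) (by simp))
  rw [ENNReal.ofReal_toReal (by simp)] at hKi
  refine ⟨K, hK, ?_⟩
  rintro _ ⟨i, rfl⟩
  calc μs i Kᶜ = 1 - μs i K := prob_compl_eq_one_sub hK.measurableSet
    _ ≤ 1 - (1 - min ε 1) := tsub_le_tsub_left (hKi i) 1
    _ ≤ min ε 1 := tsub_tsub_le_tsub_add.trans (by simp)
    _ ≤ ε := min_le_left _ _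

namespace MeasureTheory.ProbabilityMeasure

theorem tendsto_map_of_tendstoUniformlyOn_isCompact {X Y ι : Type*}
    [TopologicalSpace X] [T2Space X] [MeasurableSpace X] [OpensMeasurableSpace X]
    [UniformSpace Y] [MeasurableSpace Y] [BorelSpace Y] {L : Filter ι}
    {νs : ι → ProbabilityMeasure X} {ν : ProbabilityMeasure X} (lim : Tendsto νs L (𝓝 ν))
    (tight : IsTightMeasureSet (range fun i => (νs i : Measure X)))
    {fs : ι → X → Y} {f : X → Y} (fs_cont : ∀ i, Continuous (fs i)) (f_cont : Continuous f)
    (hunif : ∀ K, IsCompact K → TendstoUniformlyOn fs f L K) :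
    Tendsto (fun i => (νs i).map (fs_cont i).measurable.aemeasurable) L
      (𝓝 (ν.map f_cont.measurable.aemeasurable)) := by
  rw [tendsto_iff_forall_integral_tendsto] at lim ⊢
  intro g
  have hdiff : Tendsto (fun i => ∫ x, g (fs i x) - g (f x) ∂(νs i : Measure X)) L (𝓝 0) :=
    tendsto_integral_sub_of_tendstoUniformlyOn_isCompact tight
      (fun i => ((g.continuous.comp (fs_cont i)).sub
        (g.continuous.comp f_cont)).aestronglyMeasurable)
      (fun i x => by rw [← dist_eq_norm]; exact g.dist_le_two_norm _ _)
      (fun K hK => g.continuous.comp_tendstoUniformlyOn_of_isCompact_image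
        (hK.image f_cont) (hunif K hK))
  convert hdiff.add (lim (g.compContinuous ⟨f, f_cont⟩)) using 2 with i
  · have hint {h : X → Y} (hh : Continuous h) : Integrable (fun x => g (h x)) (νs i : Measure X) :=
      (g.compContinuous ⟨h, hh⟩).integrable _
    rw [toMeasure_map, integral_map (fs_cont i).aemeasurable g.continuous.aestronglyMeasurable,
      integral_sub (hint (fs_cont i)) (hint f_cont)]
    exact (sub_add_cancel _ _).symm
  · rw [zero_add, toMeasure_map, integral_map f_cont.aemeasurable g.continuous.aestronglyMeasurable]
    rfl

end MeasureTheory.ProbabilityMeasure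

/-- Abstract limiting mechanism: if `T_{i,*}(ν_i) = μ`, `ν_i → ν` weakly, `(ν_i)` is
uniformly tight, and `T_i → T` uniformly on compact sets (all maps continuous), then
`T_*(ν) = μ`. -/
theorem pushforward_of_weak_limit
    {X : Type*} [MetricSpace X] [MeasurableSpace X] [BorelSpace X]
    (μ ν : ProbabilityMeasure X) (νi : ℕ → ProbabilityMeasure X)
    (T : X → X) (Ti : ℕ → X → X)
    (hT : Continuous T) (hTi : ∀ i, Continuous (Ti i))
    (hpush : ∀ i, (νi i : Measure X).map (Ti i) = (μ : Measure X))
    (hconv : Tendsto νi atTop (nhds ν))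
    (htight : ∀ ε : ℝ, 0 < ε → ∃ K : Set X, IsCompact K ∧
        ∀ i, 1 - ENNReal.ofReal ε ≤ (νi i : Measure X) K)
    (hunif : ∀ K : Set X, IsCompact K → TendstoUniformlyOn Ti T atTop K) :
    (ν : Measure X).map T = (μ : Measure X) := by
  have tight := isTightMeasureSet_range_of_forall_exists_isCompact_one_sub_le htight
  have lim :=
    ProbabilityMeasure.tendsto_map_of_tendstoUniformlyOn_isCompact hconv tight hTi hT hunif
  have map_eq i : (νi i).map (hTi i).measurable.aemeasurable = μ :=
    ProbabilityMeasure.toMeasure_injective (hpush i)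
  simp only [map_eq] at lim
  exact congrArg ProbabilityMeasure.toMeasure (tendsto_nhds_unique lim tendsto_const_nhds)
end

section
/- Let (M, μ) be a measure space, let n ≥ 1, let g : M → [0, ∞) be μ-integrable, let H₁, …, H_n : M → ℝ be bounded measurable functions, and let σ₁, …, σ_n > 0. Let V : ℝ → ℝ be continuously differentiable and satisfy Hypothesis QC with a comparison function 𝔥 : ℝ → [0, ∞) that is nondecreasing. Set S := Σ_{k=1}^n σ_k · sup_{z∈M} |H_k(z)|. Then for every y ∈ ℝⁿ, every unit vector w ∈ ℝⁿ (i.e. Σ_{k=1}^n (wᵏ)² = 1) and every t ≥ 0, one has −Σ_{k=1}^n wᵏ σ_k ∫_M g(z) · V′( Σ_{j=1}^n σ_j (yʲ + t wʲ) H_j(z) ) · H_k(z) dμ(z) ≤ S · 𝔥(S·‖y‖) · ∫_M g dμ, where ‖y‖ is the Euclidean norm of y. -/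
/-!
Write `Φ = B + t A` with `B = ∑ σⱼ yʲ Hⱼ` and `A = ∑ wᵏ σₖ Hₖ`, so that the integrand of the
left-hand side is `-g V'(B + t A) A`. Hypothesis QC, applied at `u = B` with `r = ± t A`
according to the sign of `A`, bounds `-V'(B + t A) A` by `𝔥(B) |A|`, and `|A| ≤ S`,
`|B| ≤ S ‖y‖` pointwise because `|wᵏ| ≤ 1` and `|yᵏ| ≤ ‖y‖`. Integrating against `g ≥ 0`
gives the claim.
-/

open MeasureTheory

/-- Hypothesis QC, phrased through the derivative `V'` of the potential. -/
def SatisfiesQC (V' 𝔥 : ℝ → ℝ) : Prop :=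
  ∀ u r : ℝ, 0 ≤ r → -V' (u + r) ≤ 𝔥 u ∧ V' (u - r) ≤ 𝔥 u

namespace SatisfiesQC

variable {V' 𝔥 : ℝ → ℝ}

-- At `r = 0` Hypothesis QC reads `|V' u| ≤ 𝔥 u`.
lemma nonneg (hQC : SatisfiesQC V' 𝔥) (u : ℝ) : 0 ≤ 𝔥 u := by
  obtain ⟨hneg, hpos⟩ := hQC u 0 le_rfl
  rw [add_zero] at hneg
  rw [sub_zero] at hpos
  linarith

lemma neg_mul_le_mul_abs (hQC : SatisfiesQC V' 𝔥) (u a : ℝ) {t : ℝ} (ht : 0 ≤ t) :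
    -V' (u + t * a) * a ≤ 𝔥 u * |a| := by
  rcases le_total 0 a with ha | ha
  · rw [abs_of_nonneg ha]
    exact mul_le_mul_of_nonneg_right (hQC u (t * a) (mul_nonneg ht ha)).1 ha
  · have hle := (hQC u (-(t * a)) (neg_nonneg.2 (mul_nonpos_of_nonneg_of_nonpos ht ha))).2
    rw [sub_neg_eq_add] at hle
    rw [abs_of_nonpos ha]
    linarith [mul_le_mul_of_nonneg_right hle (neg_nonneg.2 ha)]

lemma neg_mul_le_of_abs_le (hQC : SatisfiesQC V' 𝔥) (h𝔥 : Monotone 𝔥) {u a t R S : ℝ} (ht : 0 ≤ t)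
    (hu : |u| ≤ R) (ha : |a| ≤ S) : -V' (u + t * a) * a ≤ S * 𝔥 R :=
  calc -V' (u + t * a) * a ≤ 𝔥 u * |a| := hQC.neg_mul_le_mul_abs u a ht
    _ ≤ 𝔥 R * S := mul_le_mul (h𝔥 ((le_abs_self u).trans hu)) ha (abs_nonneg a) (hQC.nonneg R)
    _ = S * 𝔥 R := mul_comm _ _

end SatisfiesQC

lemma abs_le_sqrt_sum_sq {ι : Type*} [Fintype ι] (y : ι → ℝ) (k : ι) :
    |y k| ≤ √(∑ j, y j ^ 2) :=
  Real.abs_le_sqrt (Finset.single_le_sum (fun j _ => sq_nonneg (y j)) (Finset.mem_univ k))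

lemma abs_sum_mul_le_sum_mul {ι : Type*} (s : Finset ι) {a b x m : ι → ℝ}
    (ha : ∀ k, |a k| ≤ b k) (hx : ∀ k, |x k| ≤ m k) :
    |∑ k ∈ s, a k * x k| ≤ ∑ k ∈ s, b k * m k := by
  refine (Finset.abs_sum_le_sum_abs _ _).trans (Finset.sum_le_sum fun k _ => ?_)
  rw [abs_mul]
  exact mul_le_mul (ha k) (hx k) (abs_nonneg _) ((abs_nonneg _).trans (ha k))

lemma abs_sum_mul_mul_le {ι : Type*} (s : Finset ι) {c σ x C : ι → ℝ} {m : ℝ}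
    (hc : ∀ k, |c k| ≤ m) (hσ : ∀ k, 0 ≤ σ k) (hx : ∀ k, |x k| ≤ C k) :
    |∑ k ∈ s, c k * σ k * x k| ≤ (∑ k ∈ s, σ k * C k) * m := by
  refine (abs_sum_mul_le_sum_mul s (b := fun k => m * σ k) (fun k => ?_) hx).trans_eq ?_
  · rw [abs_mul, abs_of_nonneg (hσ k)]
    exact mul_le_mul_of_nonneg_right (hc k) (hσ k)
  · rw [Finset.sum_mul]
    exact Finset.sum_congr rfl fun k _ => by ring

lemma abs_le_iSup_abs {M : Type*} {f : M → ℝ} (hf : ∃ C, ∀ z, |f z| ≤ C) (z : M) :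
    |f z| ≤ ⨆ z, |f z| :=
  le_ciSup (hf.imp fun _ hC => Set.forall_mem_range.2 hC) z

lemma Continuous.exists_norm_comp_le {M : Type*} {f : ℝ → ℝ} (hf : Continuous f) {Φ : M → ℝ}
    {K : ℝ} (hΦ : ∀ z, |Φ z| ≤ K) : ∃ D, ∀ z, ‖f (Φ z)‖ ≤ D := by
  obtain ⟨D, hD⟩ := (isCompact_Icc (a := -K) (b := K)).exists_bound_of_continuousOn hf.continuousOn
  exact ⟨D, fun z => hD _ (abs_le.1 (hΦ z))⟩

section Integral

variable {M : Type*} [MeasurableSpace M] {μ : Measure M}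

lemma MeasureTheory.Integrable.mul_continuous_comp {g : M → ℝ} (hg : Integrable g μ) {f : ℝ → ℝ}
    (hf : Continuous f) {Φ : M → ℝ} (hΦm : Measurable Φ) {K : ℝ} (hΦ : ∀ z, |Φ z| ≤ K) :
    Integrable (fun z => g z * f (Φ z)) μ := by
  obtain ⟨D, hD⟩ := hf.exists_norm_comp_le hΦ
  exact hg.mul_bdd (hf.measurable.comp hΦm).aestronglyMeasurable (ae_of_all _ hD)

lemma sum_mul_integral_mul_eq_integral_mul_sum {ι : Type*} (s : Finset ι) (c : ι → ℝ)
    {f : M → ℝ} {H : ι → M → ℝ} (hint : ∀ k ∈ s, Integrable (fun z => f z * H k z) μ) :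
    ∑ k ∈ s, c k * ∫ z, f z * H k z ∂μ = ∫ z, f z * ∑ k ∈ s, c k * H k z ∂μ := by
  have hint' : ∀ k ∈ s, Integrable (fun z => f z * (c k * H k z)) μ := fun k hk =>
    ((hint k hk).const_mul (c k)).congr (ae_of_all _ fun z => mul_left_comm _ _ _)
  simp_rw [Finset.mul_sum]
  rw [integral_finsetSum s hint']
  refine Finset.sum_congr rfl fun k _ => ?_
  rw [← integral_const_mul]
  simp_rw [mul_left_comm]

end Integral

theorem reduced_potential_QC_bound_general
    {M : Type*} [MeasurableSpace M] (μ : Measure M) (n : ℕ)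
    (g : M → ℝ) (hg0 : ∀ z, 0 ≤ g z) (hgint : Integrable g μ)
    (H : Fin n → M → ℝ) (hHmeas : ∀ k, Measurable (H k))
    (hHbdd : ∀ k, ∃ C : ℝ, ∀ z, |H k z| ≤ C)
    (σ : Fin n → ℝ) (hσ : ∀ k, 0 < σ k)
    (V' : ℝ → ℝ) (hV'cont : Continuous V')
    (𝔥 : ℝ → ℝ) (h𝔥mono : Monotone 𝔥)
    (hQC : ∀ u r : ℝ, 0 ≤ r → -V' (u + r) ≤ 𝔥 u ∧ V' (u - r) ≤ 𝔥 u)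
    (S : ℝ) (hS : S = ∑ k, σ k * ⨆ z, |H k z|)
    (y w : Fin n → ℝ) (hw : ∑ k, w k ^ 2 = 1) (t : ℝ) (ht : 0 ≤ t) :
    -∑ k, w k * σ k *
        ∫ z, g z * V' (∑ j, σ j * (y j + t * w j) * H j z) * H k z ∂μ ≤
      S * 𝔥 (S * Real.sqrt (∑ k, y k ^ 2)) * ∫ z, g z ∂μ := by
  set Φ : M → ℝ := fun z => ∑ j, σ j * (y j + t * w j) * H j z
  set A : M → ℝ := fun z => ∑ k, w k * σ k * H k z
  set B : M → ℝ := fun z => ∑ k, y k * σ k * H k z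
  have hΦ : ∀ z, Φ z = B z + t * A z := fun z => by
    simp only [Φ, A, B, Finset.mul_sum, ← Finset.sum_add_distrib]
    exact Finset.sum_congr rfl fun k _ => by ring
  have hHC : ∀ k z, |H k z| ≤ ⨆ z, |H k z| := fun k => abs_le_iSup_abs (hHbdd k)
  have hA : ∀ z, |A z| ≤ S := fun z => by
    have hw1 : ∀ k, |w k| ≤ 1 := fun k => by simpa [hw] using abs_le_sqrt_sum_sq w k
    simpa only [hS, mul_one] using abs_sum_mul_mul_le _ hw1 (hσ · |>.le) (hHC · z)
  have hB : ∀ z, |B z| ≤ S * √(∑ k, y k ^ 2) := fun z =>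
    hS ▸ abs_sum_mul_mul_le _ (abs_le_sqrt_sum_sq y) (hσ · |>.le) (hHC · z)
  have hgV : Integrable (fun z => g z * V' (Φ z)) μ :=
    hgint.mul_continuous_comp hV'cont (Finset.measurable_sum _ fun j _ => (hHmeas j).const_mul _)
      fun z => abs_sum_mul_le_sum_mul _ (fun j => le_rfl) (hHC · z)
  have hAm : Measurable A := Finset.measurable_sum _ fun k _ => (hHmeas k).const_mul _
  calc -∑ k, w k * σ k * ∫ z, g z * V' (Φ z) * H k z ∂μ
      = -∫ z, g z * V' (Φ z) * A z ∂μ := by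
        rw [sum_mul_integral_mul_eq_integral_mul_sum _ _ fun k _ =>
          hgV.mul_bdd (hHmeas k).aestronglyMeasurable (ae_of_all _ (hHC k))]
    _ = ∫ z, g z * V' (Φ z) * -A z ∂μ := by simp only [mul_neg, integral_neg]
    _ ≤ ∫ z, S * 𝔥 (S * √(∑ k, y k ^ 2)) * g z ∂μ := by
        refine integral_mono (hgV.mul_bdd hAm.neg.aestronglyMeasurable
          (ae_of_all _ fun z => (norm_neg (A z)).trans_le (hA z))) (hgint.const_mul _) fun z => ?_
        have hQCz := SatisfiesQC.neg_mul_le_of_abs_le hQC h𝔥mono ht (hB z) (hA z)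
        rw [hΦ]
        linarith [mul_le_mul_of_nonneg_left hQCz (hg0 z)]
    _ = S * 𝔥 (S * √(∑ k, y k ^ 2)) * ∫ z, g z ∂μ := integral_const_mul _ _

/-- The reduced potential `V_n^𝒜` inherits Hypothesis QC from the scalar potential `V`:
the inner directional derivative bound for the finite-dimensional reduction. -/
theorem reduced_potential_QC_bound
    {M : Type*} [MeasurableSpace M] (μ : Measure M) (n : ℕ) (hn : 1 ≤ n)
    (g : M → ℝ) (hg0 : ∀ z, 0 ≤ g z) (hgint : Integrable g μ)
    (H : Fin n → M → ℝ) (hHmeas : ∀ k, Measurable (H k))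
    (hHbdd : ∀ k, ∃ C : ℝ, ∀ z, |H k z| ≤ C)
    (σ : Fin n → ℝ) (hσ : ∀ k, 0 < σ k)
    (V V' : ℝ → ℝ) (hV : ∀ x, HasDerivAt V (V' x) x) (hV'cont : Continuous V')
    (𝔥 : ℝ → ℝ) (h𝔥0 : ∀ x, 0 ≤ 𝔥 x) (h𝔥mono : Monotone 𝔥)
    (hQC : ∀ u r : ℝ, 0 ≤ r → -V' (u + r) ≤ 𝔥 u ∧ V' (u - r) ≤ 𝔥 u)
    (S : ℝ) (hS : S = ∑ k, σ k * ⨆ z, |H k z|)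
    (y w : Fin n → ℝ) (hw : ∑ k, w k ^ 2 = 1) (t : ℝ) (ht : 0 ≤ t) :
    -∑ k, w k * σ k *
        ∫ z, g z * V' (∑ j, σ j * (y j + t * w j) * H j z) * H k z ∂μ ≤
      S * 𝔥 (S * Real.sqrt (∑ k, y k ^ 2)) * ∫ z, g z ∂μ :=
  reduced_potential_QC_bound_general μ n g hg0 hgint H hHmeas hHbdd σ hσ V' hV'cont 𝔥 h𝔥mono hQC S
    hS y w hw t ht
end

section
/- For every integer n ≥ 1 there exist constants a > 0 and C > 0 such that for every x ∈ ℝ and every λ > 0 one has H_{2n}(x; λ) ≥ a·x^{2n} − C·λⁿ, where H_m(x; λ) := λ^{m/2} · He_m(x/√λ) denotes the Hermite polynomial of degree m of a Gaussian random variable with variance λ. -/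
open Polynomial Filter

/-- `H_m(x; λ) = λ^{m/2} · He_m(x/√λ)`, the Hermite polynomial of degree `m` of a
Gaussian random variable with variance `λ`, where `He_m` is the probabilists'
Hermite polynomial. -/
noncomputable def hermiteVar (m : ℕ) (x lam : ℝ) : ℝ :=
  lam ^ ((m : ℝ) / 2) * (Polynomial.aeval (x / Real.sqrt lam) (Polynomial.hermite m))

lemma hermite_one_var_bound (n : ℕ) (hn : 1 ≤ n) :
    ∃ C : ℝ, 0 < C ∧ ∀ y : ℝ,
      (1/2 : ℝ) * y ^ (2 * n) - C ≤ aeval y (Polynomial.hermite (2 * n)) := by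
  set q : ℝ[X] := (Polynomial.hermite (2 * n)).map (algebraMap ℤ ℝ) - C (1/2 : ℝ) * X ^ (2 * n)
    with hq
  have hdegH : ((Polynomial.hermite (2 * n)).map (algebraMap ℤ ℝ)).degree = (2 * n : ℕ) := by
    rw [degree_map_eq_of_injective (algebraMap ℤ ℝ).injective_int, degree_hermite]
  have hdeg2 : (C (1/2 : ℝ) * X ^ (2 * n)).degree = ((2 * n : ℕ) : WithBot ℕ) :=
    degree_C_mul_X_pow (2 * n) (by norm_num : (1/2 : ℝ) ≠ 0)
  have hcoef : q.coeff (2 * n) = 1/2 := by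
    simp [hq, coeff_map, coeff_hermite_self, coeff_C_mul]
    norm_num
  have hqne : q ≠ 0 := fun h => by simp [h] at hcoef
  have hdegq : q.degree = (2 * n : ℕ) := by
    apply le_antisymm
    · exact (degree_sub_le _ _).trans (by rw [hdegH, hdeg2, max_self])
    · exact le_degree_of_ne_zero (by rw [hcoef]; norm_num)
  have hnatq : q.natDegree = 2 * n := natDegree_eq_of_degree_eq_some hdegq
  have hlead : q.leadingCoeff = 1/2 := by rw [leadingCoeff, hnatq, hcoef]
  have hdegpos : 0 < q.degree := by rw [hdegq]; exact_mod_cast by omega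
  have htop : Tendsto (fun y : ℝ => q.eval y) atTop atTop :=
    q.tendsto_atTop_of_leadingCoeff_nonneg hdegpos (by rw [hlead]; norm_num)
  have hbot : Tendsto (fun y : ℝ => q.eval y) atBot atTop := by
    have hnc : (q.comp (-X : ℝ[X])).natDegree = 2 * n := by
      rw [natDegree_comp, hnatq]; simp
    have h1 : Tendsto (fun y : ℝ => (q.comp (-X)).eval y) atTop atTop := by
      apply tendsto_atTop_of_leadingCoeff_nonneg
      · rw [degree_eq_natDegree (fun h => by rw [h] at hnc; simp at hnc; omega), hnc]
        exact_mod_cast by omega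
      · rw [comp_neg_X_leadingCoeff_eq, hnatq, hlead]
        simp [pow_mul]
    have h2 : Tendsto (fun y : ℝ => q.eval (-y)) atTop atTop := by
      simpa [eval_comp] using h1
    exact (h2.comp tendsto_neg_atBot_atTop).congr (by simp)
  have hco : Tendsto (fun y : ℝ => q.eval y) (cocompact ℝ) atTop := by
    rw [cocompact_eq_atBot_atTop]
    exact tendsto_sup.2 ⟨hbot, htop⟩
  obtain ⟨z, hz⟩ := (q.continuous).exists_forall_le hco
  refine ⟨|q.eval z| + 1, by positivity, fun y => ?_⟩
  have hy := hz y
  have haev : (aeval y (Polynomial.hermite (2 * n)) : ℝ)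
      = q.eval y + (1/2 : ℝ) * y ^ (2 * n) := by
    simp [hq, aeval_def, eval_map]
  have hzz : -(|q.eval z| + 1) ≤ q.eval y := by
    have := neg_abs_le (q.eval z)
    linarith
  linarith [haev]


/-- Pointwise lower bound for Wick powers: for every `n ≥ 1` there are `a, C > 0` with
`H_{2n}(x; λ) ≥ a·x^{2n} − C·λⁿ` for all `x ∈ ℝ` and `λ > 0`. -/
theorem hermite_lower_bound (n : ℕ) (hn : 1 ≤ n) :
    ∃ a C : ℝ, 0 < a ∧ 0 < C ∧
      ∀ x lam : ℝ, 0 < lam →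
        a * x ^ (2 * n) - C * lam ^ n ≤ hermiteVar (2 * n) x lam := by
  obtain ⟨C, hC, hbd⟩ := hermite_one_var_bound n hn
  refine ⟨1/2, C, by norm_num, hC, fun x lam hlam => ?_⟩
  have hs : (0:ℝ) < Real.sqrt lam := Real.sqrt_pos.2 hlam
  have hpow : (lam : ℝ) ^ (((2 * n : ℕ) : ℝ) / 2) = lam ^ n := by
    rw [show ((2 * n : ℕ) : ℝ) / 2 = (n : ℝ) by push_cast; ring, Real.rpow_natCast]
  have hx : lam ^ n * (x / Real.sqrt lam) ^ (2 * n) = x ^ (2 * n) := by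
    have : lam ^ n = (Real.sqrt lam) ^ (2 * n) := by
      rw [pow_mul, Real.sq_sqrt hlam.le]
    rw [this, div_pow]
    field_simp
  have h := hbd (x / Real.sqrt lam)
  unfold hermiteVar
  rw [hpow]
  have hln : (0:ℝ) < lam ^ n := by positivity
  nlinarith [mul_le_mul_of_nonneg_left h hln.le]
end

section
/- Let ℓ > 0 and m > 0, and let J : ℝ → ℝ be a continuously differentiable nondecreasing function with J(0) = 0. For λ > 0 define the weight w_λ(ẑ) := (1 + λ²‖ẑ‖²)^{−ℓ/2} for ẑ ∈ ℝ⁴. Then there exists λ₀ > 0, depending only on ℓ and m, such that for every 0 < λ ≤ λ₀ and every Schwartz function f : ℝ⁴ → ℝ one has ∫_{ℝ⁴} w_λ(ẑ) · J(f(ẑ)) · ( −Δf(ẑ) + m² f(ẑ) ) dẑ ≥ (m²/2) ∫_{ℝ⁴} w_λ(ẑ) · J(f(ẑ)) · f(ẑ) dẑ, where Δ denotes the Laplacian on ℝ⁴ (the sum of the second partial derivatives) and ‖·‖ the Euclidean norm. -/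
/-!
Write `w = (1 + λ²‖z‖²)^p` with `p = -ℓ/2` and `G(t) = ∫₀ᵗ J`. In each coordinate direction `v`,
integrating by parts twice gives
`∫ w J(f) ∂ᵥ²f = -∫ w J'(f) (∂ᵥf)² - ∫ ∂ᵥw J(f) ∂ᵥf ≤ -∫ ∂ᵥw ∂ᵥ(G ∘ f) = ∫ ∂ᵥ²w G(f)`,
because `J' ≥ 0`, `w ≥ 0` and `J(f) ∂ᵥf = ∂ᵥ(G ∘ f)`. Summing over the directions,
`Δw ≤ 4p(p - 1) λ² w = (ℓ² + 2ℓ) λ² w` and `0 ≤ G(t) ≤ t J(t)`, so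
`∫ w J(f) Δf ≤ (ℓ² + 2ℓ) λ² ∫ w J(f) f`, which is at most `(m²/2) ∫ w J(f) f` once
`(ℓ² + 2ℓ) λ² ≤ m²/2`.
-/

open MeasureTheory

/-- The Laplacian on `ℝ⁴`: the sum of the second partial derivatives. -/
noncomputable def laplacian4 (f : EuclideanSpace ℝ (Fin 4) → ℝ)
    (x : EuclideanSpace ℝ (Fin 4)) : ℝ :=
  ∑ i : Fin 4,
    fderiv ℝ (fun y => fderiv ℝ f y (EuclideanSpace.single i 1)) x (EuclideanSpace.single i 1)

open scoped SchwartzMap LineDeriv RealInnerProductSpace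

section Primitive

variable {J : ℝ → ℝ}

theorem mul_le_intervalIntegral_zero_of_monotone (hJ : Monotone J) (t : ℝ) :
    t * J 0 ≤ ∫ τ in (0 : ℝ)..t, J τ := by
  rcases le_total 0 t with ht | ht
  · simpa using intervalIntegral.integral_mono_on (μ := volume) ht intervalIntegrable_const
      hJ.intervalIntegrable fun τ hτ => hJ hτ.1
  · have h := intervalIntegral.integral_mono_on (μ := volume) ht hJ.intervalIntegrable
      intervalIntegrable_const fun τ hτ => hJ hτ.2
    rw [intervalIntegral.integral_symm]
    simp only [intervalIntegral.integral_const, smul_eq_mul] at h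
    linarith

theorem intervalIntegral_zero_le_mul_of_monotone (hJ : Monotone J) (t : ℝ) :
    ∫ τ in (0 : ℝ)..t, J τ ≤ t * J t := by
  rcases le_total 0 t with ht | ht
  · simpa using intervalIntegral.integral_mono_on (μ := volume) ht hJ.intervalIntegrable
      intervalIntegrable_const fun τ hτ => hJ hτ.2
  · have h := intervalIntegral.integral_mono_on (μ := volume) ht intervalIntegrable_const
      hJ.intervalIntegrable fun τ hτ => hJ hτ.1
    rw [intervalIntegral.integral_symm]
    simp only [intervalIntegral.integral_const, smul_eq_mul] at h
    linarith

end Primitive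

theorem MeasureTheory.Integrable.bdd_continuous_mul {α : Type*} [TopologicalSpace α]
    [MeasurableSpace α] [OpensMeasurableSpace α] [SecondCountableTopologyEither α ℝ]
    {μ : Measure α} {φ g : α → ℝ} (hg : Integrable g μ) (hφ : Continuous φ)
    (hφb : ∃ C, ∀ z, ‖φ z‖ ≤ C) : Integrable (fun z => φ z * g z) μ :=
  let ⟨_, hC⟩ := hφb
  hg.bdd_mul hφ.aestronglyMeasurable (.of_forall hC)

section DirectionalDerivative

variable {E F : Type*} [NormedAddCommGroup E] [NormedSpace ℝ E] [NormedAddCommGroup F]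
  [NormedSpace ℝ F] {n : WithTop ℕ∞} {w : E → F}

theorem ContDiff.fderiv_apply_const (hw : ContDiff ℝ (n + 1) w) (v : E) :
    ContDiff ℝ n fun y => fderiv ℝ w y v :=
  (hw.fderiv_right le_rfl).clm_apply contDiff_const

theorem ContDiff.continuous_fderiv_apply_const (hw : ContDiff ℝ n w) (hn : n ≠ 0) (v : E) :
    Continuous fun y => fderiv ℝ w y v :=
  (hw.continuous_fderiv hn).clm_apply continuous_const

end DirectionalDerivative

namespace SchwartzMap

variable {E : Type*} [NormedAddCommGroup E] [NormedSpace ℝ E]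

theorem exists_norm_comp_le (f : 𝓢(E, ℝ)) {J : ℝ → ℝ} (hJ : Continuous J) :
    ∃ C, ∀ z, ‖J (f z)‖ ≤ C := by
  set R := SchwartzMap.seminorm ℝ 0 0 f
  obtain ⟨C, hC⟩ :=
    (isCompact_Icc (a := -R) (b := R)).exists_bound_of_continuousOn hJ.continuousOn
  exact ⟨C, fun z => hC _ (abs_le.1 (f.norm_le_seminorm ℝ z))⟩

variable [MeasurableSpace E] [BorelSpace E] {μ : Measure E}

theorem integrable_comp_mul (f : 𝓢(E, ℝ)) {J : ℝ → ℝ} (hJ : Continuous J) {g : E → ℝ}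
    (hg : Integrable g μ) : Integrable (fun z => J (f z) * g z) μ :=
  hg.bdd_continuous_mul (hJ.comp f.continuous) (f.exists_norm_comp_le hJ)

variable [FiniteDimensional ℝ E] [μ.IsAddHaarMeasure]

theorem integrable_intervalIntegral_comp (f : 𝓢(E, ℝ)) {J : ℝ → ℝ} (hJc : Continuous J)
    (hJ : Monotone J) : Integrable (fun z => ∫ τ in (0 : ℝ)..f z, J τ) μ := by
  have hf : Integrable f μ := f.integrable
  refine integrable_of_le_of_le (g₁ := fun z => J 0 * f z) (g₂ := fun z => J (f z) * f z)
    ?_ (.of_forall fun z => ?_) (.of_forall fun z => ?_) (hf.const_mul _)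
    (f.integrable_comp_mul hJc hf)
  · exact ((intervalIntegral.continuous_primitive (fun _ _ => hJc.intervalIntegrable _ _) 0).comp
      f.continuous).aestronglyMeasurable
  · simpa [mul_comm] using mul_le_intervalIntegral_zero_of_monotone hJ (f z)
  · simpa [mul_comm] using intervalIntegral_zero_le_mul_of_monotone hJ (f z)

end SchwartzMap

section IntegrationByParts

variable {E : Type*} [NormedAddCommGroup E] [NormedSpace ℝ E] [FiniteDimensional ℝ E]
  [MeasurableSpace E] [BorelSpace E] {μ : Measure E} [μ.IsAddHaarMeasure] {J : ℝ → ℝ}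

theorem integral_mul_comp_mul_lineDerivOp_lineDerivOp_le {w : E → ℝ} (v : E)
    (hw : ContDiff ℝ 1 w) (hw0 : ∀ z, 0 ≤ w z) (hwb : ∃ C, ∀ z, ‖w z‖ ≤ C)
    (hw'b : ∃ C, ∀ z, ‖fderiv ℝ w z v‖ ≤ C) (hJ : ContDiff ℝ 1 J) (hJm : Monotone J)
    (f : 𝓢(E, ℝ)) :
    ∫ z, w z * J (f z) * ∂_{v} (∂_{v} f) z ∂μ ≤
      -∫ z, fderiv ℝ w z v * (J (f z) * ∂_{v} f z) ∂μ := by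
  set f' := ∂_{v} f
  have hJc : Continuous J := hJ.continuous
  have hJ'c : Continuous (deriv J) := hJ.continuous_deriv le_rfl
  have hwJf : ∀ z, HasFDerivAt (fun y => w y * J (f y))
      (w z • deriv J (f z) • fderiv ℝ f z + J (f z) • fderiv ℝ w z) z := fun z =>
    (hw.differentiable one_ne_zero z).hasFDerivAt.mul
      ((hJ.differentiable one_ne_zero (f z)).hasDerivAt.comp_hasFDerivAt z (f.hasFDerivAt z))
  have hwJf_apply : ∀ z, fderiv ℝ (fun y => w y * J (f y)) z v * f' z =
      fderiv ℝ w z v * (J (f z) * f' z) + w z * (deriv J (f z) * (f' z * f' z)) := fun z => by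
    simp only [(hwJf z).fderiv, add_apply, smul_apply, smul_eq_mul, f',
      SchwartzMap.lineDerivOp_apply_eq_fderiv]
    ring
  have hwJf_int : ∀ {g : E → ℝ}, Integrable g μ →
      Integrable (fun z => w z * (J (f z) * g z)) μ := fun hg =>
    (f.integrable_comp_mul hJc hg).bdd_continuous_mul hw.continuous hwb
  have hw'Jff' : Integrable (fun z => fderiv ℝ w z v * (J (f z) * f' z)) μ :=
    (f.integrable_comp_mul hJc f'.integrable).bdd_continuous_mul
      (hw.continuous_fderiv_apply_const one_ne_zero v) hw'b
  have hwJ'f'f' : Integrable (fun z => w z * (deriv J (f z) * (f' z * f' z))) μ :=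
    (f.integrable_comp_mul hJ'c (f'.integrable_comp_mul continuous_id
      f'.integrable)).bdd_continuous_mul hw.continuous hwb
  have hd_wJf_f' : Integrable (fun z => fderiv ℝ (fun y => w y * J (f y)) z v * f' z) μ :=
    (hw'Jff'.add hwJ'f'f').congr (.of_forall fun z => (hwJf_apply z).symm)
  have ibp := integral_mul_fderiv_eq_neg_fderiv_mul_of_integrable (μ := μ) (v := v) hd_wJf_f'
    (by simpa only [mul_assoc] using hwJf_int (∂_{v} f').integrable)
    (by simpa only [mul_assoc] using hwJf_int f'.integrable)
    (fun z _ => (hwJf z).differentiableAt) (fun z _ => f'.differentiableAt)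
  have hmono : ∫ z, fderiv ℝ w z v * (J (f z) * f' z) ∂μ ≤
      ∫ z, fderiv ℝ (fun y => w y * J (f y)) z v * f' z ∂μ := by
    refine integral_mono hw'Jff' hd_wJf_f' fun z => ?_
    rw [hwJf_apply]
    exact le_add_of_nonneg_right
      (mul_nonneg (hw0 z) (mul_nonneg hJm.deriv_nonneg (mul_self_nonneg _)))
  change ∫ z, w z * J (f z) * fderiv ℝ f' z v ∂μ ≤ _
  linarith

theorem integral_mul_comp_mul_lineDerivOp_eq {u : E → ℝ} (v : E) (hu : ContDiff ℝ 1 u)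
    (hub : ∃ C, ∀ z, ‖u z‖ ≤ C) (hu'b : ∃ C, ∀ z, ‖fderiv ℝ u z v‖ ≤ C) (hJ : Continuous J)
    (hJm : Monotone J) (f : 𝓢(E, ℝ)) :
    ∫ z, u z * (J (f z) * ∂_{v} f z) ∂μ =
      -∫ z, fderiv ℝ u z v * (∫ τ in (0 : ℝ)..f z, J τ) ∂μ := by
  have hGf : ∀ z, HasFDerivAt (fun y => ∫ τ in (0 : ℝ)..f y, J τ) (J (f z) • fderiv ℝ f z) z :=
    fun z => (hJ.integral_hasStrictDerivAt 0 (f z)).hasDerivAt.comp_hasFDerivAt z (f.hasFDerivAt z)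
  have hGf_apply : ∀ z, fderiv ℝ (fun y => ∫ τ in (0 : ℝ)..f y, J τ) z v = J (f z) * ∂_{v} f z :=
    fun z => by simp [(hGf z).fderiv, SchwartzMap.lineDerivOp_apply_eq_fderiv]
  have hG_int := f.integrable_intervalIntegral_comp (μ := μ) hJ hJm
  have hJf_int := f.integrable_comp_mul hJ (∂_{v} f).integrable (μ := μ)
  simp_rw [← hGf_apply]
  exact integral_mul_fderiv_eq_neg_fderiv_mul_of_integrable
    (hG_int.bdd_continuous_mul (hu.continuous_fderiv_apply_const one_ne_zero v) hu'b)
    (by simpa only [hGf_apply] using hJf_int.bdd_continuous_mul hu.continuous hub)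
    (hG_int.bdd_continuous_mul hu.continuous hub)
    (fun z _ => hu.differentiable one_ne_zero z) (fun z _ => (hGf z).differentiableAt)

theorem integral_mul_comp_mul_lineDerivOp_lineDerivOp_le_integral {w : E → ℝ} (v : E)
    (hw : ContDiff ℝ 2 w) (hw0 : ∀ z, 0 ≤ w z) (hwb : ∃ C, ∀ z, ‖w z‖ ≤ C)
    (hw'b : ∃ C, ∀ z, ‖fderiv ℝ w z v‖ ≤ C)
    (hw''b : ∃ C, ∀ z, ‖fderiv ℝ (fun y => fderiv ℝ w y v) z v‖ ≤ C)
    (hJ : ContDiff ℝ 1 J) (hJm : Monotone J) (f : 𝓢(E, ℝ)) :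
    ∫ z, w z * J (f z) * ∂_{v} (∂_{v} f) z ∂μ ≤
      ∫ z, fderiv ℝ (fun y => fderiv ℝ w y v) z v * (∫ τ in (0 : ℝ)..f z, J τ) ∂μ := by
  calc _ ≤ -∫ z, fderiv ℝ w z v * (J (f z) * ∂_{v} f z) ∂μ :=
        integral_mul_comp_mul_lineDerivOp_lineDerivOp_le v (hw.of_le (by norm_num)) hw0 hwb hw'b
          hJ hJm f
    _ = _ := by
        rw [integral_mul_comp_mul_lineDerivOp_eq v (hw.fderiv_apply_const v) hw'b hw''b
          hJ.continuous hJm f, neg_neg]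

end IntegrationByParts

section BracketWeight

variable {E : Type*} [NormedAddCommGroup E] {lam p : ℝ} {z : E}

noncomputable def bracketWeight (lam p : ℝ) (z : E) : ℝ := (1 + lam ^ 2 * ‖z‖ ^ 2) ^ p

theorem one_le_one_add_sq_mul_norm_sq (lam : ℝ) (z : E) : 1 ≤ 1 + lam ^ 2 * ‖z‖ ^ 2 :=
  le_add_of_nonneg_right (by positivity)

theorem bracketWeight_pos : 0 < bracketWeight lam p z :=
  Real.rpow_pos_of_pos (by positivity) p

theorem bracketWeight_le_one (hp : p ≤ 0) : bracketWeight lam p z ≤ 1 :=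
  Real.rpow_le_one_of_one_le_of_nonpos (one_le_one_add_sq_mul_norm_sq lam z) hp

theorem norm_bracketWeight_le_one (hp : p ≤ 0) : ‖bracketWeight lam p z‖ ≤ 1 := by
  rw [Real.norm_of_nonneg bracketWeight_pos.le]
  exact bracketWeight_le_one hp

theorem bracketWeight_sub_one_le : bracketWeight lam (p - 1) z ≤ bracketWeight lam p z :=
  Real.rpow_le_rpow_of_exponent_le (one_le_one_add_sq_mul_norm_sq lam z) (by linarith)

theorem mul_bracketWeight_sub_one_le {x : ℝ} (hx : x ≤ 1 + lam ^ 2 * ‖z‖ ^ 2) :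
    x * bracketWeight lam (p - 1) z ≤ bracketWeight lam p z := by
  have hq : 0 < 1 + lam ^ 2 * ‖z‖ ^ 2 := by positivity
  calc x * bracketWeight lam (p - 1) z ≤ (1 + lam ^ 2 * ‖z‖ ^ 2) * bracketWeight lam (p - 1) z :=
        mul_le_mul_of_nonneg_right hx bracketWeight_pos.le
    _ = bracketWeight lam p z := by
        rw [bracketWeight, Real.rpow_sub_one hq.ne', mul_div_cancel₀ _ hq.ne', bracketWeight]

theorem sq_mul_norm_sq_mul_bracketWeight_sub_two_le (lam p : ℝ) (z : E) :
    lam ^ 2 * ‖z‖ ^ 2 * bracketWeight lam (p - 2) z ≤ bracketWeight lam (p - 1) z := by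
  have h := mul_bracketWeight_sub_one_le (p := p - 1) (le_add_of_nonneg_left zero_le_one)
    (x := lam ^ 2 * ‖z‖ ^ 2) (z := z)
  rwa [sub_sub, one_add_one_eq_two] at h

variable [InnerProductSpace ℝ E]

theorem contDiff_bracketWeight {n : WithTop ℕ∞} (lam p : ℝ) :
    ContDiff ℝ n (bracketWeight (E := E) lam p) :=
  (contDiff_const.add (contDiff_const.mul (contDiff_norm_sq ℝ))).rpow_const_of_ne
    fun _ => by positivity

theorem hasFDerivAt_bracketWeight (lam p : ℝ) (z : E) :
    HasFDerivAt (bracketWeight lam p)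
      ((2 * p * lam ^ 2 * bracketWeight lam (p - 1) z) • innerSL ℝ z) z := by
  have hq := ((hasStrictFDerivAt_norm_sq z).hasFDerivAt.const_mul (lam ^ 2)).const_add 1
  refine ((Real.hasDerivAt_rpow_const (p := p) (Or.inl (by positivity))).comp_hasFDerivAt z
    hq).congr_fderiv ?_
  ext y
  simp only [smul_apply, coe_innerSL_apply, nsmul_eq_mul, Nat.cast_ofNat, smul_eq_mul,
    bracketWeight]
  ring

theorem fderiv_bracketWeight_apply (lam p : ℝ) (z v : E) :
    fderiv ℝ (bracketWeight lam p) z v =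
      2 * p * lam ^ 2 * bracketWeight lam (p - 1) z * ⟪z, v⟫ := by
  simp [(hasFDerivAt_bracketWeight lam p z).fderiv]

theorem fderiv_fderiv_bracketWeight_apply (lam p : ℝ) (z v : E) :
    fderiv ℝ (fun y => fderiv ℝ (bracketWeight lam p) y v) z v =
      2 * p * lam ^ 2 * (bracketWeight lam (p - 1) z * ‖v‖ ^ 2 +
        2 * (p - 1) * lam ^ 2 * bracketWeight lam (p - 2) z * ⟪z, v⟫ ^ 2) := by
  have hinner : HasFDerivAt (fun y : E => ⟪y, v⟫) (innerSL ℝ v) z := by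
    simpa [real_inner_comm] using (innerSL ℝ v).hasFDerivAt (x := z)
  have h := ((hasFDerivAt_bracketWeight lam (p - 1) z).const_mul (2 * p * lam ^ 2)).mul hinner
  have hfun : (fun y => fderiv ℝ (bracketWeight lam p) y v) =
      (fun y => 2 * p * lam ^ 2 * bracketWeight lam (p - 1) y) * fun y => ⟪y, v⟫ :=
    funext fun y => fderiv_bracketWeight_apply lam p y v
  rw [hfun, h.fderiv]
  simp only [sub_sub, one_add_one_eq_two, add_apply, smul_apply, coe_innerSL_apply,
    inner_self_eq_norm_sq_to_K, Real.ringHom_apply, smul_eq_mul]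
  ring

theorem abs_fderiv_bracketWeight_apply_le (hp : p ≤ 0) (z v : E) :
    |fderiv ℝ (bracketWeight lam p) z v| ≤ 2 * |p| * |lam| * ‖v‖ := by
  have hw := bracketWeight_pos (lam := lam) (p := p - 1) (z := z)
  have key : |lam| * ‖z‖ * bracketWeight lam (p - 1) z ≤ 1 :=
    (mul_bracketWeight_sub_one_le (by nlinarith [sq_nonneg (|lam| * ‖z‖ - 1), sq_abs lam])).trans
      (bracketWeight_le_one hp)
  rw [fderiv_bracketWeight_apply]
  calc |2 * p * lam ^ 2 * bracketWeight lam (p - 1) z * ⟪z, v⟫|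
      = 2 * |p| * |lam| * (|lam| * bracketWeight lam (p - 1) z * |⟪z, v⟫|) := by
        rw [abs_mul, abs_mul, abs_mul, abs_mul, abs_of_pos hw, abs_two, abs_pow]
        ring
    _ ≤ 2 * |p| * |lam| * (|lam| * bracketWeight lam (p - 1) z * (‖z‖ * ‖v‖)) := by
        gcongr
        exact abs_real_inner_le_norm z v
    _ = 2 * |p| * |lam| * ‖v‖ * (|lam| * ‖z‖ * bracketWeight lam (p - 1) z) := by ring
    _ ≤ 2 * |p| * |lam| * ‖v‖ := mul_le_of_le_one_right (by positivity) key

theorem abs_fderiv_fderiv_bracketWeight_apply_le (hp : p ≤ 0) (z v : E) :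
    |fderiv ℝ (fun y => fderiv ℝ (bracketWeight lam p) y v) z v| ≤
      2 * |p| * (1 + 2 * |p - 1|) * lam ^ 2 * ‖v‖ ^ 2 := by
  have hw₁ := bracketWeight_pos (lam := lam) (p := p - 1) (z := z)
  have hw₂ := bracketWeight_pos (lam := lam) (p := p - 2) (z := z)
  have hw₁_le : bracketWeight lam (p - 1) z ≤ 1 := bracketWeight_le_one (by linarith)
  have hA : |bracketWeight lam (p - 1) z * ‖v‖ ^ 2| ≤ ‖v‖ ^ 2 := by
    rw [abs_of_nonneg (by positivity)]
    exact mul_le_of_le_one_left (by positivity) hw₁_le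
  have hB : |2 * (p - 1) * lam ^ 2 * bracketWeight lam (p - 2) z * ⟪z, v⟫ ^ 2| ≤
      2 * |p - 1| * ‖v‖ ^ 2 := by
    have hzv : ⟪z, v⟫ ^ 2 ≤ ‖z‖ ^ 2 * ‖v‖ ^ 2 := by
      rw [← mul_pow, ← sq_abs]
      exact pow_le_pow_left₀ (abs_nonneg _) (abs_real_inner_le_norm z v) 2
    calc |2 * (p - 1) * lam ^ 2 * bracketWeight lam (p - 2) z * ⟪z, v⟫ ^ 2|
        = 2 * |p - 1| * (lam ^ 2 * bracketWeight lam (p - 2) z * ⟪z, v⟫ ^ 2) := by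
          rw [abs_mul, abs_mul, abs_mul, abs_mul, abs_two, abs_of_pos hw₂, abs_sq, abs_sq]
          ring
      _ ≤ 2 * |p - 1| * (lam ^ 2 * bracketWeight lam (p - 2) z * (‖z‖ ^ 2 * ‖v‖ ^ 2)) := by
          gcongr
      _ = 2 * |p - 1| * ‖v‖ ^ 2 * (lam ^ 2 * ‖z‖ ^ 2 * bracketWeight lam (p - 2) z) := by ring
      _ ≤ 2 * |p - 1| * ‖v‖ ^ 2 := mul_le_of_le_one_right (by positivity)
          ((sq_mul_norm_sq_mul_bracketWeight_sub_two_le lam p z).trans hw₁_le)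
  rw [fderiv_fderiv_bracketWeight_apply, abs_mul, abs_mul, abs_mul, abs_two, abs_sq]
  calc 2 * |p| * lam ^ 2 * |bracketWeight lam (p - 1) z * ‖v‖ ^ 2 +
        2 * (p - 1) * lam ^ 2 * bracketWeight lam (p - 2) z * ⟪z, v⟫ ^ 2|
      ≤ 2 * |p| * lam ^ 2 * (‖v‖ ^ 2 + 2 * |p - 1| * ‖v‖ ^ 2) := by
        gcongr
        exact (abs_add_le _ _).trans (add_le_add hA hB)
    _ = 2 * |p| * (1 + 2 * |p - 1|) * lam ^ 2 * ‖v‖ ^ 2 := by ring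

theorem sum_fderiv_fderiv_bracketWeight_le {ι : Type*} [Fintype ι] (b : OrthonormalBasis ι ℝ E)
    (hp : p ≤ 0) (z : E) :
    ∑ i, fderiv ℝ (fun y => fderiv ℝ (bracketWeight lam p) y (b i)) z (b i) ≤
      4 * p * (p - 1) * lam ^ 2 * bracketWeight lam p z := by
  have hsum : ∑ i, fderiv ℝ (fun y => fderiv ℝ (bracketWeight lam p) y (b i)) z (b i) =
      2 * p * lam ^ 2 * (Fintype.card ι * bracketWeight lam (p - 1) z) +
        4 * p * (p - 1) * lam ^ 2 * (lam ^ 2 * ‖z‖ ^ 2 * bracketWeight lam (p - 2) z) := by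
    simp only [fderiv_fderiv_bracketWeight_apply, b.orthonormal.1, ← Finset.mul_sum,
      Finset.sum_add_distrib, b.sum_sq_inner_left]
    simp only [one_pow, Finset.sum_const, Finset.card_univ, nsmul_eq_mul, mul_one]
    ring
  have h₁ : 2 * p * lam ^ 2 * (Fintype.card ι * bracketWeight lam (p - 1) z) ≤ 0 :=
    mul_nonpos_of_nonpos_of_nonneg (by nlinarith [sq_nonneg lam])
      (mul_nonneg (by positivity) bracketWeight_pos.le)
  have h₂ : lam ^ 2 * ‖z‖ ^ 2 * bracketWeight lam (p - 2) z ≤ bracketWeight lam p z :=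
    (sq_mul_norm_sq_mul_bracketWeight_sub_two_le lam p z).trans bracketWeight_sub_one_le
  have hc : 0 ≤ 4 * p * (p - 1) * lam ^ 2 := by
    nlinarith [mul_nonneg (mul_nonneg_of_nonpos_of_nonpos hp (by linarith : p - 1 ≤ 0))
      (sq_nonneg lam)]
  rw [hsum]
  nlinarith [mul_le_mul_of_nonneg_left h₂ hc]

end BracketWeight

section WeightedCoercivity

variable {E : Type*} [NormedAddCommGroup E] [MeasurableSpace E] {μ : Measure E}
  {ι : Type*} [Fintype ι] {lam p : ℝ} {J : ℝ → ℝ}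

theorem integral_bracketWeight_mul_comp_mul_self_nonneg (hJm : Monotone J) (hJ0 : J 0 = 0)
    (f : E → ℝ) : 0 ≤ ∫ z, bracketWeight lam p z * J (f z) * f z ∂μ := by
  refine integral_nonneg fun z => ?_
  rw [mul_assoc]
  refine mul_nonneg bracketWeight_pos.le ?_
  rcases le_total 0 (f z) with h | h
  · exact mul_nonneg (hJ0 ▸ hJm h) h
  · exact mul_nonneg_of_nonpos_of_nonpos (hJ0 ▸ hJm h) h

variable [InnerProductSpace ℝ E] [BorelSpace E]

theorem integrable_bracketWeight_mul_comp_mul (hp : p ≤ 0) (hJ : Continuous J) (f : 𝓢(E, ℝ))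
    {g : E → ℝ} (hg : Integrable g μ) :
    Integrable (fun z => bracketWeight lam p z * J (f z) * g z) μ := by
  simpa only [mul_assoc] using (f.integrable_comp_mul hJ hg).bdd_continuous_mul
    (contDiff_bracketWeight (n := 0) lam p).continuous ⟨1, fun _ => norm_bracketWeight_le_one hp⟩

variable [FiniteDimensional ℝ E] [μ.IsAddHaarMeasure]

theorem sum_integral_bracketWeight_mul_comp_mul_lineDerivOp_lineDerivOp_le
    (b : OrthonormalBasis ι ℝ E) (hp : p ≤ 0) (hJ : ContDiff ℝ 1 J) (hJm : Monotone J)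
    (hJ0 : J 0 = 0) (f : 𝓢(E, ℝ)) :
    ∑ i, ∫ z, bracketWeight lam p z * J (f z) * ∂_{b i} (∂_{b i} f) z ∂μ ≤
      4 * p * (p - 1) * lam ^ 2 * ∫ z, bracketWeight lam p z * J (f z) * f z ∂μ := by
  set w₂ := fun (i : ι) (z : E) =>
    fderiv ℝ (fun y => fderiv ℝ (bracketWeight lam p) y (b i)) z (b i)
  have hw : ContDiff ℝ 2 (bracketWeight (E := E) lam p) := contDiff_bracketWeight lam p
  have hw₂G : ∀ i, Integrable (fun z => w₂ i z * ∫ τ in (0 : ℝ)..f z, J τ) μ := fun i =>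
    (f.integrable_intervalIntegral_comp hJ.continuous hJm).bdd_continuous_mul
      ((hw.fderiv_apply_const (b i)).continuous_fderiv_apply_const one_ne_zero (b i))
      ⟨_, fun z => abs_fderiv_fderiv_bracketWeight_apply_le hp z (b i)⟩
  have hpt : ∀ z, ∑ i, w₂ i z * ∫ τ in (0 : ℝ)..f z, J τ ≤
      4 * p * (p - 1) * lam ^ 2 * (bracketWeight lam p z * J (f z) * f z) := fun z => by
    have hG0 : 0 ≤ ∫ τ in (0 : ℝ)..f z, J τ := by
      simpa [hJ0] using mul_le_intervalIntegral_zero_of_monotone hJm (f z)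
    have hc : 0 ≤ 4 * p * (p - 1) * lam ^ 2 * bracketWeight lam p z := by
      nlinarith [mul_nonneg (mul_nonneg (mul_nonneg_of_nonpos_of_nonpos hp (by linarith :
        p - 1 ≤ 0)) (sq_nonneg lam)) (bracketWeight_pos (lam := lam) (p := p) (z := z)).le]
    rw [← Finset.sum_mul]
    calc (∑ i, w₂ i z) * ∫ τ in (0 : ℝ)..f z, J τ
        ≤ 4 * p * (p - 1) * lam ^ 2 * bracketWeight lam p z * ∫ τ in (0 : ℝ)..f z, J τ :=
          mul_le_mul_of_nonneg_right (sum_fderiv_fderiv_bracketWeight_le b hp z) hG0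
      _ ≤ 4 * p * (p - 1) * lam ^ 2 * bracketWeight lam p z * (f z * J (f z)) :=
          mul_le_mul_of_nonneg_left (intervalIntegral_zero_le_mul_of_monotone hJm (f z)) hc
      _ = _ := by ring
  calc ∑ i, ∫ z, bracketWeight lam p z * J (f z) * ∂_{b i} (∂_{b i} f) z ∂μ
      ≤ ∑ i, ∫ z, w₂ i z * (∫ τ in (0 : ℝ)..f z, J τ) ∂μ :=
        Finset.sum_le_sum fun i _ =>
          integral_mul_comp_mul_lineDerivOp_lineDerivOp_le_integral (b i) hw
            (fun z => bracketWeight_pos.le) ⟨1, fun z => norm_bracketWeight_le_one hp⟩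
            ⟨_, fun z => abs_fderiv_bracketWeight_apply_le hp z (b i)⟩
            ⟨_, fun z => abs_fderiv_fderiv_bracketWeight_apply_le hp z (b i)⟩ hJ hJm f
    _ = ∫ z, ∑ i, w₂ i z * (∫ τ in (0 : ℝ)..f z, J τ) ∂μ :=
        (integral_finsetSum _ fun i _ => hw₂G i).symm
    _ ≤ ∫ z, 4 * p * (p - 1) * lam ^ 2 * (bracketWeight lam p z * J (f z) * f z) ∂μ :=
        integral_mono (integrable_finsetSum _ fun i _ => hw₂G i)
          ((integrable_bracketWeight_mul_comp_mul hp hJ.continuous f f.integrable).const_mul _) hpt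
    _ = _ := integral_const_mul _ _

theorem sub_mul_integral_le_integral_bracketWeight_mul_comp_mul_neg_sum_add
    (b : OrthonormalBasis ι ℝ E) (hp : p ≤ 0) (hJ : ContDiff ℝ 1 J) (hJm : Monotone J)
    (hJ0 : J 0 = 0) (c : ℝ) (f : 𝓢(E, ℝ)) :
    (c - 4 * p * (p - 1) * lam ^ 2) * ∫ z, bracketWeight lam p z * J (f z) * f z ∂μ ≤
      ∫ z, bracketWeight lam p z * J (f z) * (-∑ i, ∂_{b i} (∂_{b i} f) z + c * f z) ∂μ := by
  have hint : ∀ g : 𝓢(E, ℝ), Integrable (fun z => bracketWeight lam p z * J (f z) * g z) μ :=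
    fun g => integrable_bracketWeight_mul_comp_mul hp hJ.continuous f g.integrable
  have hsum : Integrable (fun z =>
      -∑ i, bracketWeight lam p z * J (f z) * ∂_{b i} (∂_{b i} f) z) μ :=
    (integrable_finsetSum _ fun i _ => hint _).neg
  have hsplit : ∫ z, bracketWeight lam p z * J (f z) * (-∑ i, ∂_{b i} (∂_{b i} f) z + c * f z) ∂μ =
      -∑ i, ∫ z, bracketWeight lam p z * J (f z) * ∂_{b i} (∂_{b i} f) z ∂μ +
        c * ∫ z, bracketWeight lam p z * J (f z) * f z ∂μ := by
    rw [← integral_const_mul, ← integral_finsetSum _ fun i _ => hint _, ← integral_neg,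
      ← integral_add hsum ((hint f).const_mul c)]
    congr 1 with z
    rw [mul_add, mul_neg, Finset.mul_sum]
    ring
  rw [hsplit]
  linarith [sum_integral_bracketWeight_mul_comp_mul_lineDerivOp_lineDerivOp_le (μ := μ)
    (lam := lam) b hp hJ hJm hJ0 f]

end WeightedCoercivity

/-- Weighted coercivity of `-Δ + m²` tested against `J(f)`: for `λ` small enough
(depending only on `ℓ` and `m`), for all nondecreasing `C¹` functions `J` with `J(0) = 0`
and all Schwartz `f`,
`∫ w_λ J(f) (−Δf + m²f) ≥ (m²/2) ∫ w_λ J(f) f` with `w_λ(ẑ) = (1 + λ²‖ẑ‖²)^{−ℓ/2}`. -/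
theorem weighted_coercivity (ℓ m : ℝ) (hℓ : 0 < ℓ) (hm : 0 < m) :
    ∃ lam₀ : ℝ, 0 < lam₀ ∧
      ∀ J : ℝ → ℝ, ContDiff ℝ 1 J → Monotone J → J 0 = 0 →
      ∀ lam : ℝ, 0 < lam → lam ≤ lam₀ →
      ∀ f : SchwartzMap (EuclideanSpace ℝ (Fin 4)) ℝ,
        m ^ 2 / 2 *
            ∫ z : EuclideanSpace ℝ (Fin 4),
              (1 + lam ^ 2 * ‖z‖ ^ 2) ^ (-(ℓ / 2)) * J (f z) * f z ≤
          ∫ z : EuclideanSpace ℝ (Fin 4),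
            (1 + lam ^ 2 * ‖z‖ ^ 2) ^ (-(ℓ / 2)) * J (f z) *
              (-laplacian4 (⇑f) z + m ^ 2 * f z) := by
  have hC : 0 < ℓ ^ 2 + 2 * ℓ := by positivity
  -- `ℓ² + 2ℓ = 4p(p - 1)` for `p = -ℓ/2`
  refine ⟨m / √(2 * (ℓ ^ 2 + 2 * ℓ)), by positivity, fun J hJ hJm hJ0 lam hlam hlam₀ f => ?_⟩
  have hlam_sq : (ℓ ^ 2 + 2 * ℓ) * lam ^ 2 ≤ m ^ 2 / 2 := by
    have h := pow_le_pow_left₀ hlam.le hlam₀ 2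
    rw [div_pow, Real.sq_sqrt (by positivity), le_div_iff₀ (by positivity)] at h
    linarith
  set b := EuclideanSpace.basisFun (Fin 4) ℝ
  have hΔ : laplacian4 f = fun z => ∑ i, ∂_{b i} (∂_{b i} f) z := by
    funext z
    simp only [laplacian4, EuclideanSpace.basisFun_apply, b]
    rfl
  have key := sub_mul_integral_le_integral_bracketWeight_mul_comp_mul_neg_sum_add (μ := volume)
    (lam := lam) b (by linarith : -(ℓ / 2) ≤ 0) hJ hJm hJ0 (m ^ 2) f
  have hnonneg := integral_bracketWeight_mul_comp_mul_self_nonneg (μ := volume) (lam := lam)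
    (p := -(ℓ / 2)) hJm hJ0 f
  simp only [bracketWeight] at key hnonneg
  rw [hΔ]
  nlinarith [mul_nonneg (by linarith : 0 ≤ m ^ 2 / 2 - (ℓ ^ 2 + 2 * ℓ) * lam ^ 2) hnonneg]
end

section
/- For every m > 0 there exists β₀ > 0 such that for every 0 < β ≤ β₀ the function ω_β(x) := exp(−β·√(1 + ‖x‖²)) on ℝ² satisfies, for all x ∈ ℝ², the inequality | ω_β(x)·Δω_β(x) − 2‖∇ω_β(x)‖² | < 2 m² · ω_β(x)², where Δ is the Laplacian on ℝ², ∇ the gradient, and ‖·‖ the Euclidean norm. -/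
/-- The Laplacian on `ℝ²`: the sum of the second partial derivatives. -/
noncomputable def laplacian2 (f : EuclideanSpace ℝ (Fin 2) → ℝ)
    (x : EuclideanSpace ℝ (Fin 2)) : ℝ :=
  ∑ i : Fin 2,
    fderiv ℝ (fun y => fderiv ℝ f y (EuclideanSpace.single i 1)) x (EuclideanSpace.single i 1)

/-- The exponential weight `ω_β(x) = exp(−β√(1 + ‖x‖²))` on `ℝ²`. -/
noncomputable def expWeight (β : ℝ) (x : EuclideanSpace ℝ (Fin 2)) : ℝ :=
  Real.exp (-β * Real.sqrt (1 + ‖x‖ ^ 2))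

/-!
Write `⟨x⟩ = √(1 + ‖x‖²)`, so that `ω_β = exp(-β⟨x⟩)` and `∇ω_β = -β ω_β x / ⟨x⟩`. Since
`Δ⟨x⟩ = (2 + ‖x‖²)/⟨x⟩³` in the plane, a direct computation gives
`ω_β Δω_β - 2‖∇ω_β‖² = -ω_β² (β² ‖x‖²/⟨x⟩² + β (2 + ‖x‖²)/⟨x⟩³)`.
As `⟨x⟩ ≥ 1`, the two fractions are bounded by `1` and `2` uniformly in `x`, so its absolute value is
at most `(β² + 2β) ω_β² ≤ 3β ω_β²`, which is below `2m² ω_β²` once `β ≤ min 1 (m²/2)`.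
-/

open Real RealInnerProductSpace

section JapaneseBracket

variable {E : Type*} [NormedAddCommGroup E]

noncomputable def japaneseBracket (x : E) : ℝ := √(1 + ‖x‖ ^ 2)

theorem sq_japaneseBracket (x : E) : japaneseBracket x ^ 2 = 1 + ‖x‖ ^ 2 :=
  sq_sqrt (by positivity)

theorem one_le_japaneseBracket (x : E) : 1 ≤ japaneseBracket x :=
  one_le_sqrt.2 (by simp)

theorem japaneseBracket_pos (x : E) : 0 < japaneseBracket x :=
  one_pos.trans_le (one_le_japaneseBracket x)

theorem norm_sq_div_japaneseBracket_sq_le_one (x : E) :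
    ‖x‖ ^ 2 / japaneseBracket x ^ 2 ≤ 1 := by
  rw [div_le_one (pow_pos (japaneseBracket_pos x) 2), sq_japaneseBracket]
  linarith

theorem two_add_norm_sq_div_japaneseBracket_pow_three_le_two (x : E) :
    (2 + ‖x‖ ^ 2) / japaneseBracket x ^ 3 ≤ 2 := by
  have hg := one_le_japaneseBracket x
  have hg2 := sq_japaneseBracket x
  rw [div_le_iff₀ (by positivity)]
  nlinarith

variable [InnerProductSpace ℝ E]

theorem hasFDerivAt_japaneseBracket (x : E) :
    HasFDerivAt japaneseBracket ((japaneseBracket x)⁻¹ • innerSL ℝ x) x := by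
  have h : HasFDerivAt japaneseBracket _ x :=
    ((hasStrictFDerivAt_norm_sq x).hasFDerivAt.const_add 1).sqrt (by positivity)
  refine h.congr_fderiv ?_
  have : √(1 + ‖x‖ ^ 2) ≠ 0 := (japaneseBracket_pos x).ne'
  ext v
  simp [japaneseBracket]
  field_simp

theorem hasFDerivAt_exp_neg_mul_japaneseBracket (β : ℝ) (x : E) :
    HasFDerivAt (fun y => exp (-β * japaneseBracket y))
      ((-β * exp (-β * japaneseBracket x) / japaneseBracket x) • innerSL ℝ x) x := by
  convert ((hasFDerivAt_japaneseBracket x).const_mul (-β)).exp using 1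
  rw [smul_smul, smul_smul]
  congr 1
  ring

theorem fderiv_exp_neg_mul_japaneseBracket_apply (β : ℝ) (x v : E) :
    fderiv ℝ (fun y => exp (-β * japaneseBracket y)) x v =
      -β * exp (-β * japaneseBracket x) * (japaneseBracket x)⁻¹ * ⟪x, v⟫ := by
  rw [(hasFDerivAt_exp_neg_mul_japaneseBracket β x).fderiv]
  simp [div_eq_mul_inv]

theorem fderiv_fderiv_exp_neg_mul_japaneseBracket_apply (β : ℝ) (x v : E) :
    fderiv ℝ (fun y => fderiv ℝ (fun z => exp (-β * japaneseBracket z)) y v) x v =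
      exp (-β * japaneseBracket x) * (β ^ 2 * ⟪x, v⟫ ^ 2 / japaneseBracket x ^ 2
        + β * ⟪x, v⟫ ^ 2 / japaneseBracket x ^ 3 - β * ‖v‖ ^ 2 / japaneseBracket x) := by
  have hg := (japaneseBracket_pos x).ne'
  have hinv := (hasDerivAt_inv hg).comp_hasFDerivAt x (hasFDerivAt_japaneseBracket x)
  have h : HasFDerivAt
      (fun y => -β * exp (-β * japaneseBracket y) * (japaneseBracket y)⁻¹ * ⟪v, y⟫) _ x :=
    (((hasFDerivAt_exp_neg_mul_japaneseBracket β x).const_mul (-β)).mul hinv).mul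
      (innerSL ℝ v).hasFDerivAt
  simp only [fderiv_exp_neg_mul_japaneseBracket_apply, real_inner_comm v]
  rw [h.fderiv]
  simp [real_inner_comm x v]
  field_simp
  ring

theorem gradient_exp_neg_mul_japaneseBracket [CompleteSpace E] (β : ℝ) (x : E) :
    gradient (fun y => exp (-β * japaneseBracket y)) x =
      (-β * exp (-β * japaneseBracket x) / japaneseBracket x) • x := by
  refine (hasGradientAt_iff_hasFDerivAt.2 ?_).gradient
  refine (hasFDerivAt_exp_neg_mul_japaneseBracket β x).congr_fderiv ?_
  ext v
  simp

end JapaneseBracket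

section Plane

local notation "ℝ²" => EuclideanSpace ℝ (Fin 2)

theorem expWeight_eq (β : ℝ) :
    expWeight β = fun x : ℝ² => exp (-β * japaneseBracket x) := rfl

theorem laplacian2_expWeight (β : ℝ) (x : ℝ²) :
    laplacian2 (expWeight β) x = expWeight β x * (β ^ 2 * ‖x‖ ^ 2 / japaneseBracket x ^ 2
        + β * ‖x‖ ^ 2 / japaneseBracket x ^ 3 - 2 * β / japaneseBracket x) := by
  simp only [laplacian2, expWeight_eq, fderiv_fderiv_exp_neg_mul_japaneseBracket_apply,
    EuclideanSpace.inner_single_right, PiLp.norm_single, Fin.sum_univ_two]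
  rw [EuclideanSpace.real_norm_sq_eq, Fin.sum_univ_two]
  simp
  ring

theorem norm_gradient_expWeight_sq (β : ℝ) (x : ℝ²) :
    ‖gradient (expWeight β) x‖ ^ 2 =
      expWeight β x ^ 2 * β ^ 2 * ‖x‖ ^ 2 / japaneseBracket x ^ 2 := by
  rw [expWeight_eq, gradient_exp_neg_mul_japaneseBracket, norm_smul, Real.norm_eq_abs, mul_pow,
    sq_abs]
  ring

theorem expWeight_mul_laplacian2_sub_two_mul_norm_gradient_sq (β : ℝ) (x : ℝ²) :
    expWeight β x * laplacian2 (expWeight β) x - 2 * ‖gradient (expWeight β) x‖ ^ 2 =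
      -(expWeight β x ^ 2 * (β ^ 2 * (‖x‖ ^ 2 / japaneseBracket x ^ 2)
        + β * ((2 + ‖x‖ ^ 2) / japaneseBracket x ^ 3))) := by
  have hg := (japaneseBracket_pos x).ne'
  have hg2 := sq_japaneseBracket x
  rw [laplacian2_expWeight, norm_gradient_expWeight_sq]
  field_simp
  linear_combination (-2 * β * expWeight β x ^ 2) * hg2

end Plane

/-- For every `m > 0` there is `β₀ > 0` such that for all `0 < β ≤ β₀` the exponential
weight satisfies `|ω_β Δω_β − 2‖∇ω_β‖²| < 2m² ω_β²` everywhere. -/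
theorem expWeight_laplacian_bound (m : ℝ) (hm : 0 < m) :
    ∃ β₀ : ℝ, 0 < β₀ ∧
      ∀ β : ℝ, 0 < β → β ≤ β₀ →
      ∀ x : EuclideanSpace ℝ (Fin 2),
        |expWeight β x * laplacian2 (expWeight β) x -
            2 * ‖gradient (expWeight β) x‖ ^ 2| <
          2 * m ^ 2 * expWeight β x ^ 2 := by
  refine ⟨min 1 (m ^ 2 / 2), by positivity, fun β hβ hβ₀ x => ?_⟩
  have hβ₁ : β ≤ 1 := hβ₀.trans (min_le_left _ _)
  have hβm : β ≤ m ^ 2 / 2 := hβ₀.trans (min_le_right _ _)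
  have hg := japaneseBracket_pos x
  rw [expWeight_mul_laplacian2_sub_two_mul_norm_gradient_sq, abs_neg,
    abs_of_nonneg (by positivity)]
  calc _ ≤ expWeight β x ^ 2 * (β ^ 2 * 1 + β * 2) := by
        gcongr
        exacts [norm_sq_div_japaneseBracket_sq_le_one x,
          two_add_norm_sq_div_japaneseBracket_pow_three_le_two x]
    _ < expWeight β x ^ 2 * (2 * m ^ 2) :=
        mul_lt_mul_of_pos_left (by nlinarith) (pow_pos (exp_pos _) 2)
    _ = 2 * m ^ 2 * expWeight β x ^ 2 := by ring
end

section
/- For every ℓ ∈ ℝ and every m > 0 there exists θ₀ > 0 such that for every 0 < θ ≤ θ₀ the function r_{ℓ,θ}(x) := (1 + θ‖x‖²)^{−ℓ} on ℝ² satisfies, for all x ∈ ℝ², the inequality | r_{ℓ,θ}(x)·Δr_{ℓ,θ}(x) − 2‖∇r_{ℓ,θ}(x)‖² | < 2 m² · r_{ℓ,θ}(x)², where Δ is the Laplacian on ℝ², ∇ the gradient, and ‖·‖ the Euclidean norm. -/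
/-- The polynomial weight `r_{ℓ,θ}(x) = (1 + θ‖x‖²)^{−ℓ}` on `ℝ²`. -/
noncomputable def polyWeight (ℓ θ : ℝ) (x : EuclideanSpace ℝ (Fin 2)) : ℝ :=
  (1 + θ * ‖x‖ ^ 2) ^ (-ℓ)

open scoped RealInnerProductSpace

section RadialCalculus

variable {E : Type*} [NormedAddCommGroup E] [InnerProductSpace ℝ E]
  {φ φ' φ'' : ℝ → ℝ}

theorem HasDerivAt.hasFDerivAt_comp_norm_sq {d : ℝ} {x : E} (h : HasDerivAt φ d (‖x‖ ^ 2)) :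
    HasFDerivAt (fun y => φ (‖y‖ ^ 2)) ((2 * d) • innerSL ℝ x) x := by
  refine (h.comp_hasFDerivAt x (hasStrictFDerivAt_norm_sq x).hasFDerivAt).congr_fderiv ?_
  rw [smul_comm, mul_smul, two_smul, two_smul]

theorem HasDerivAt.hasGradientAt_comp_norm_sq [CompleteSpace E] {d : ℝ} {x : E}
    (h : HasDerivAt φ d (‖x‖ ^ 2)) :
    HasGradientAt (fun y => φ (‖y‖ ^ 2)) ((2 * d) • x) x := by
  rw [hasGradientAt_iff_hasFDerivAt, map_smul]
  exact h.hasFDerivAt_comp_norm_sq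

theorem fderiv_fderiv_comp_norm_sq_apply
    (hφ : ∀ t, 0 ≤ t → HasDerivAt φ (φ' t) t) (hφ' : ∀ t, 0 ≤ t → HasDerivAt φ' (φ'' t) t)
    (x v : E) :
    fderiv ℝ (fun y => fderiv ℝ (fun z => φ (‖z‖ ^ 2)) y v) x v
      = 4 * φ'' (‖x‖ ^ 2) * ⟪x, v⟫ ^ 2 + 2 * φ' (‖x‖ ^ 2) * ‖v‖ ^ 2 := by
  have hfirst : (fun y => fderiv ℝ (fun z => φ (‖z‖ ^ 2)) y v)
      = fun y => 2 * φ' (‖y‖ ^ 2) * ⟪y, v⟫ := by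
    funext y
    rw [(hφ _ (sq_nonneg _)).hasFDerivAt_comp_norm_sq.fderiv]
    simp [real_inner_comm]
  have hinner : HasFDerivAt (fun y : E => ⟪y, v⟫) (innerSL ℝ v) x := by
    simpa [real_inner_comm] using (innerSL ℝ v).hasFDerivAt
  have hsecond : HasFDerivAt (fun y => 2 * φ' (‖y‖ ^ 2) * ⟪y, v⟫) _ x :=
    ((hφ' _ (sq_nonneg _)).hasFDerivAt_comp_norm_sq.const_mul 2).mul hinner
  rw [hfirst, hsecond.fderiv]
  simp only [add_apply, smul_apply, innerSL_apply_apply,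
    real_inner_self_eq_norm_sq, smul_eq_mul]
  ring

theorem laplacian2_comp_norm_sq
    (hφ : ∀ t, 0 ≤ t → HasDerivAt φ (φ' t) t) (hφ' : ∀ t, 0 ≤ t → HasDerivAt φ' (φ'' t) t)
    (x : EuclideanSpace ℝ (Fin 2)) :
    laplacian2 (fun z => φ (‖z‖ ^ 2)) x = 4 * φ'' (‖x‖ ^ 2) * ‖x‖ ^ 2 + 4 * φ' (‖x‖ ^ 2) := by
  have hbasis := (EuclideanSpace.basisFun (Fin 2) ℝ).sum_sq_inner_left x
  simp only [EuclideanSpace.basisFun_apply] at hbasis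
  simp only [laplacian2, fderiv_fderiv_comp_norm_sq_apply hφ hφ', Finset.sum_add_distrib,
    ← Finset.mul_sum, hbasis, PiLp.norm_single, norm_one]
  simp only [one_pow, Finset.sum_const, Finset.card_univ, Fintype.card_fin, nsmul_eq_mul]
  ring

end RadialCalculus

theorem hasDerivAt_one_add_mul_rpow {θ p t : ℝ} (h : 0 < 1 + θ * t) :
    HasDerivAt (fun t => (1 + θ * t) ^ p) (p * θ * (1 + θ * t) ^ (p - 1)) t := by
  have := (((hasDerivAt_id t).const_mul θ).const_add 1).rpow_const (p := p) (Or.inl h.ne')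
  simpa [mul_comm, mul_left_comm, mul_assoc] using this

noncomputable def polyWeightDefect (ℓ θ s : ℝ) : ℝ :=
  -(4 * ℓ * θ + 4 * ℓ ^ 2 * θ ^ 2 * s) / (1 + θ * s) ^ 2

theorem polyWeight_mul_laplacian2_sub_sq_norm_gradient {ℓ θ : ℝ} (hθ : 0 ≤ θ)
    (x : EuclideanSpace ℝ (Fin 2)) :
    polyWeight ℓ θ x * laplacian2 (polyWeight ℓ θ) x - 2 * ‖gradient (polyWeight ℓ θ) x‖ ^ 2
      = polyWeightDefect ℓ θ (‖x‖ ^ 2) * polyWeight ℓ θ x ^ 2 := by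
  have hpos : ∀ t, 0 ≤ t → 0 < 1 + θ * t := fun t ht => by positivity
  have hφ : ∀ t, 0 ≤ t → HasDerivAt (fun t => (1 + θ * t) ^ (-ℓ))
      (-ℓ * θ * (1 + θ * t) ^ (-ℓ - 1)) t := fun t ht => hasDerivAt_one_add_mul_rpow (hpos t ht)
  have hφ' : ∀ t, 0 ≤ t → HasDerivAt (fun t => -ℓ * θ * (1 + θ * t) ^ (-ℓ - 1))
      (-ℓ * θ * ((-ℓ - 1) * θ * (1 + θ * t) ^ (-ℓ - 1 - 1))) t :=
    fun t ht => (hasDerivAt_one_add_mul_rpow (hpos t ht)).const_mul _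
  have hu := hpos _ (sq_nonneg ‖x‖)
  rw [show polyWeight ℓ θ = fun z => (1 + θ * ‖z‖ ^ 2) ^ (-ℓ) from rfl,
    laplacian2_comp_norm_sq hφ hφ', ((hφ _ (sq_nonneg _)).hasGradientAt_comp_norm_sq).gradient,
    norm_smul, Real.rpow_sub_one hu.ne', Real.rpow_sub_one hu.ne', polyWeightDefect]
  simp only [Real.norm_eq_abs, mul_pow, sq_abs]
  field_simp
  ring

theorem abs_polyWeightDefect_lt {ℓ θ s m : ℝ} (hθ : 0 < θ) (hs : 0 ≤ s)
    (hθm : 2 * θ * (|ℓ| + 1) ^ 2 ≤ m ^ 2) :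
    |polyWeightDefect ℓ θ s| < 2 * m ^ 2 := by
  have hu : 1 ≤ 1 + θ * s := by nlinarith
  have hθs : 0 ≤ θ * s := by positivity
  have hnum : |4 * ℓ * θ + 4 * ℓ ^ 2 * θ ^ 2 * s| ≤ 4 * θ * |ℓ| * (|ℓ| + 1) * (1 + θ * s) :=
    calc |4 * ℓ * θ + 4 * ℓ ^ 2 * θ ^ 2 * s|
        ≤ 4 * θ * |ℓ| + 4 * θ * |ℓ| ^ 2 * (θ * s) := by
          refine (abs_add_le _ _).trans_eq ?_
          simp only [abs_mul, abs_pow, abs_of_pos hθ, abs_of_nonneg hs,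
            abs_of_pos (four_pos : (0 : ℝ) < 4)]
          ring
      _ ≤ 4 * θ * |ℓ| * (|ℓ| + 1) * (1 + θ * s) := by
          nlinarith [mul_nonneg (mul_nonneg hθ.le (abs_nonneg ℓ)) hθs]
  rw [polyWeightDefect, abs_div, abs_neg, abs_pow, abs_of_pos (by positivity : 0 < 1 + θ * s)]
  calc |4 * ℓ * θ + 4 * ℓ ^ 2 * θ ^ 2 * s| / (1 + θ * s) ^ 2
      ≤ 4 * θ * |ℓ| * (|ℓ| + 1) * (1 + θ * s) / (1 + θ * s) ^ 2 := by gcongr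
    _ ≤ 4 * θ * |ℓ| * (|ℓ| + 1) := by
      rw [sq, ← div_div, mul_div_cancel_right₀ _ (by positivity)]
      exact div_le_self (by positivity) hu
    _ < 4 * θ * (|ℓ| + 1) ^ 2 := by
      nlinarith [abs_nonneg ℓ]
    _ ≤ 2 * m ^ 2 := by linarith

/-- For every `ℓ ∈ ℝ` and `m > 0` there is `θ₀ > 0` such that for all `0 < θ ≤ θ₀` the
polynomial weight satisfies `|r_{ℓ,θ} Δr_{ℓ,θ} − 2‖∇r_{ℓ,θ}‖²| < 2m² r_{ℓ,θ}²` everywhere. -/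
theorem polyWeight_laplacian_bound (ℓ m : ℝ) (hm : 0 < m) :
    ∃ θ₀ : ℝ, 0 < θ₀ ∧
      ∀ θ : ℝ, 0 < θ → θ ≤ θ₀ →
      ∀ x : EuclideanSpace ℝ (Fin 2),
        |polyWeight ℓ θ x * laplacian2 (polyWeight ℓ θ) x -
            2 * ‖gradient (polyWeight ℓ θ) x‖ ^ 2| <
          2 * m ^ 2 * polyWeight ℓ θ x ^ 2 := by
  refine ⟨m ^ 2 / (2 * (|ℓ| + 1) ^ 2), by positivity, fun θ hθ hθθ₀ x => ?_⟩
  have hθm : 2 * θ * (|ℓ| + 1) ^ 2 ≤ m ^ 2 := by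
    rw [le_div_iff₀ (by positivity)] at hθθ₀
    linarith
  have hr : 0 < polyWeight ℓ θ x ^ 2 := by
    unfold polyWeight
    positivity
  rw [polyWeight_mul_laplacian2_sub_sq_norm_gradient hθ.le, abs_mul, abs_of_pos hr]
  exact mul_lt_mul_of_pos_right (abs_polyWeightDefect_lt hθ (sq_nonneg _) hθm) hr
end

section
/- Let n ≥ 1 be an integer, m > 0, and λ₁, …, λ_n ≥ 0. Let ψ¹, …, ψⁿ : ℝ² → ℝ be twice continuously differentiable functions and F₁, …, F_n : ℝ² → ℝ functions satisfying, for every k = 1, …, n and every x ∈ ℝ², the elliptic equation −Δψᵏ(x) + (m² + λ_k)·ψᵏ(x) + F_k(x) = 0. Let ρ : ℝ² → (0, ∞) be twice continuously differentiable, and suppose the function Ψ²(x) := ρ(x) · Σ_{k=1}^n (ψᵏ(x))² attains a global maximum at a point x̄ ∈ ℝ². Then m² · ρ(x̄) · Σ_{k=1}^n (ψᵏ(x̄))² ≤ −ρ(x̄) · Σ_{k=1}^n ψᵏ(x̄)·F_k(x̄) − ( ρ(x̄)·Δρ(x̄) − 2‖∇ρ(x̄)‖² )/( 2ρ(x̄)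 ) · Σ_{k=1}^n (ψᵏ(x̄))², where Δ is the Laplacian on ℝ², ∇ the gradient, and ‖·‖ the Euclidean norm. -/
open InnerProductSpace

-- If `f'' a > 0`, the second derivative test makes `a` a local minimum too, so `f` is
-- locally constant and `f'' a = 0`.
theorem IsLocalMax.deriv_deriv_nonpos {f : ℝ → ℝ} {a : ℝ} (h : IsLocalMax f a)
    (hc : ContinuousAt f a) : deriv (deriv f) a ≤ 0 := by
  by_contra! hpos
  have hmin := isLocalMin_of_deriv_deriv_pos hpos h.deriv_eq_zero hc
  have hconst : f =ᶠ[nhds a] fun _ => f a := by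
    filter_upwards [h, hmin] with y hy hy' using le_antisymm hy hy'
  have := hconst.deriv.deriv_eq
  simp only [deriv_const'] at this
  linarith

section Directional

variable {E : Type*} [NormedAddCommGroup E] [NormedSpace ℝ E]

theorem ContDiff.differentiable_fderiv_apply {f : E → ℝ} (hf : ContDiff ℝ 2 f) (v : E) :
    Differentiable ℝ (fun y => fderiv ℝ f y v) :=
  ((hf.fderiv_right (m := 1) (by norm_num)).differentiable one_ne_zero).clm_apply
    (differentiable_const v)

theorem fderiv_fderiv_mul_apply {f g : E → ℝ} (hf : ContDiff ℝ 2 f) (hg : ContDiff ℝ 2 g)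
    (v x : E) :
    fderiv ℝ (fun y => fderiv ℝ (fun z => f z * g z) y v) x v =
      fderiv ℝ (fun y => fderiv ℝ f y v) x v * g x + 2 * (fderiv ℝ f x v * fderiv ℝ g x v) +
        f x * fderiv ℝ (fun y => fderiv ℝ g y v) x v := by
  have hf1 := hf.differentiable two_ne_zero
  have hg1 := hg.differentiable two_ne_zero
  have hf2 := hf.differentiable_fderiv_apply v
  have hg2 := hg.differentiable_fderiv_apply v
  have hfirst : (fun y => fderiv ℝ (fun z => f z * g z) y v) =
      fun y => f y * fderiv ℝ g y v + g y * fderiv ℝ f y v := funext fun y => by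
    simp [fderiv_fun_mul (hf1 y) (hg1 y)]
  rw [hfirst, fderiv_fun_add ((hf1 x).fun_mul (hg2 x)) ((hg1 x).fun_mul (hf2 x)),
    fderiv_fun_mul (hf1 x) (hg2 x), fderiv_fun_mul (hg1 x) (hf2 x)]
  simp only [add_apply, smul_apply, smul_eq_mul]
  ring

theorem fderiv_fderiv_sum_apply {ι : Type*} (s : Finset ι) {f : ι → E → ℝ}
    (hf : ∀ k ∈ s, ContDiff ℝ 2 (f k)) (v x : E) :
    fderiv ℝ (fun y => fderiv ℝ (fun z => ∑ k ∈ s, f k z) y v) x v =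
      ∑ k ∈ s, fderiv ℝ (fun y => fderiv ℝ (f k) y v) x v := by
  have hfirst : (fun y => fderiv ℝ (fun z => ∑ k ∈ s, f k z) y v) =
      fun y => ∑ k ∈ s, fderiv ℝ (f k) y v := funext fun y => by
    simp [fderiv_fun_sum fun k hk => (hf k hk).differentiable two_ne_zero y]
  rw [hfirst, fderiv_fun_sum fun k hk => (hf k hk).differentiable_fderiv_apply v x]
  simp

theorem IsLocalMax.fderiv_fderiv_apply_nonpos {g : E → ℝ} {x : E} (h : IsLocalMax g x)
    (hg : Differentiable ℝ g) (v : E)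
    (hg' : DifferentiableAt ℝ (fun y => fderiv ℝ g y v) x) :
    fderiv ℝ (fun y => fderiv ℝ g y v) x v ≤ 0 := by
  have hline : ∀ t : ℝ, HasDerivAt (fun s : ℝ => x + s • v) v t := fun t => by
    simpa using ((hasDerivAt_id t).smul_const v).const_add x
  have hderiv : deriv (fun t : ℝ => g (x + t • v)) = fun t => fderiv ℝ g (x + t • v) v :=
    funext fun t => ((hg _).hasFDerivAt.comp_hasDerivAt t (hline t)).deriv
  have hmax : IsLocalMax (fun t : ℝ => g (x + t • v)) 0 :=
    IsLocalMax.comp_continuous (g := fun s : ℝ => x + s • v) (by simpa using h)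
      (hline 0).continuousAt
  have hsecond := hmax.deriv_deriv_nonpos
    ((hg.continuous.comp (continuous_const.add (continuous_id.smul continuous_const))).continuousAt)
  have hchain := (show HasFDerivAt (fun y => fderiv ℝ g y v) _ (x + (0 : ℝ) • v) by
    simpa using hg'.hasFDerivAt).comp_hasDerivAt 0 (hline 0)
  rw [hderiv] at hsecond
  exact hchain.deriv.symm.trans_le hsecond

end Directional

theorem IsLocalMax.mul_inner_gradient_eq {F : Type*} [NormedAddCommGroup F]
    [InnerProductSpace ℝ F] [CompleteSpace F] {f g : F → ℝ} {x : F}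
    (h : IsLocalMax (fun y => f y * g y) x) (hf : DifferentiableAt ℝ f x)
    (hg : DifferentiableAt ℝ g x) :
    f x * inner ℝ (gradient f x) (gradient g x) = -(g x * ‖gradient f x‖ ^ 2) := by
  have hcrit := congrArg (fun L => L (gradient f x)) h.fderiv_eq_zero
  simp only [fderiv_fun_mul hf hg, add_apply, smul_apply, smul_eq_mul,
    ← inner_gradient_left, real_inner_self_eq_norm_sq, zero_apply] at hcrit
  rw [real_inner_comm]
  linarith

section Laplacian

variable {ι : Type*} [Fintype ι] [DecidableEq ι]

noncomputable def coordLaplacian (f : EuclideanSpace ℝ ι → ℝ) (x : EuclideanSpace ℝ ι) : ℝ :=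
  ∑ i, fderiv ℝ (fun y => fderiv ℝ f y (EuclideanSpace.single i 1)) x (EuclideanSpace.single i 1)

theorem laplacian2_eq_coordLaplacian : laplacian2 = coordLaplacian := rfl

theorem gradient_apply_eq_fderiv (f : EuclideanSpace ℝ ι → ℝ) (x : EuclideanSpace ℝ ι) (i : ι) :
    gradient f x i = fderiv ℝ f x (EuclideanSpace.single i 1) := by
  rw [← inner_gradient_left, EuclideanSpace.inner_single_right]
  simp

theorem inner_gradient_eq_sum_fderiv (f g : EuclideanSpace ℝ ι → ℝ) (x : EuclideanSpace ℝ ι) :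
    inner ℝ (gradient f x) (gradient g x) =
      ∑ i, fderiv ℝ f x (EuclideanSpace.single i 1) * fderiv ℝ g x (EuclideanSpace.single i 1) := by
  simp only [PiLp.inner_apply, gradient_apply_eq_fderiv, RCLike.inner_apply, conj_trivial]
  exact Finset.sum_congr rfl fun i _ => mul_comm _ _

theorem coordLaplacian_mul {f g : EuclideanSpace ℝ ι → ℝ} (hf : ContDiff ℝ 2 f)
    (hg : ContDiff ℝ 2 g) (x : EuclideanSpace ℝ ι) :
    coordLaplacian (fun y => f y * g y) x =
      coordLaplacian f x * g x + 2 * inner ℝ (gradient f x) (gradient g x) +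
        f x * coordLaplacian g x := by
  simp only [coordLaplacian, fderiv_fderiv_mul_apply hf hg, Finset.sum_add_distrib,
    ← Finset.sum_mul, ← Finset.mul_sum, inner_gradient_eq_sum_fderiv]

theorem coordLaplacian_sq {f : EuclideanSpace ℝ ι → ℝ} (hf : ContDiff ℝ 2 f)
    (x : EuclideanSpace ℝ ι) :
    coordLaplacian (fun y => f y ^ 2) x =
      2 * (f x * coordLaplacian f x) + 2 * ‖gradient f x‖ ^ 2 := by
  simp only [sq, coordLaplacian_mul hf hf, real_inner_self_eq_norm_mul_norm]
  ring

theorem coordLaplacian_sum {κ : Type*} (s : Finset κ) {f : κ → EuclideanSpace ℝ ι → ℝ}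
    (hf : ∀ k ∈ s, ContDiff ℝ 2 (f k)) (x : EuclideanSpace ℝ ι) :
    coordLaplacian (fun y => ∑ k ∈ s, f k y) x = ∑ k ∈ s, coordLaplacian (f k) x := by
  simp only [coordLaplacian, fderiv_fderiv_sum_apply s hf]
  exact Finset.sum_comm

theorem two_mul_sum_mul_coordLaplacian_le {κ : Type*} (s : Finset κ)
    {ψ : κ → EuclideanSpace ℝ ι → ℝ} (hψ : ∀ k ∈ s, ContDiff ℝ 2 (ψ k))
    (x : EuclideanSpace ℝ ι) :
    2 * ∑ k ∈ s, ψ k x * coordLaplacian (ψ k) x ≤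
      coordLaplacian (fun y => ∑ k ∈ s, ψ k y ^ 2) x := by
  rw [coordLaplacian_sum s fun k hk => (hψ k hk).pow 2, Finset.mul_sum]
  refine Finset.sum_le_sum fun k hk => ?_
  rw [coordLaplacian_sq (hψ k hk)]
  nlinarith [sq_nonneg ‖gradient (ψ k) x‖]

theorem IsLocalMax.coordLaplacian_nonpos {g : EuclideanSpace ℝ ι → ℝ} {x : EuclideanSpace ℝ ι}
    (h : IsLocalMax g x) (hg : ContDiff ℝ 2 g) : coordLaplacian g x ≤ 0 :=
  Finset.sum_nonpos fun _ _ => h.fderiv_fderiv_apply_nonpos (hg.differentiable two_ne_zero) _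
    (hg.differentiable_fderiv_apply _ x)

end Laplacian

theorem weighted_maximum_principle_general
    (n : ℕ) (m : ℝ)
    (lam : Fin n → ℝ) (hlam : ∀ k, 0 ≤ lam k)
    (ψ : Fin n → EuclideanSpace ℝ (Fin 2) → ℝ) (hψ : ∀ k, ContDiff ℝ 2 (ψ k))
    (F : Fin n → EuclideanSpace ℝ (Fin 2) → ℝ)
    (heq : ∀ k x, -laplacian2 (ψ k) x + (m ^ 2 + lam k) * ψ k x + F k x = 0)
    (ρ : EuclideanSpace ℝ (Fin 2) → ℝ) (hρ : ContDiff ℝ 2 ρ) (hρpos : ∀ x, 0 < ρ x)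
    (x₀ : EuclideanSpace ℝ (Fin 2))
    (hmax : ∀ x, ρ x * ∑ k, ψ k x ^ 2 ≤ ρ x₀ * ∑ k, ψ k x₀ ^ 2) :
    m ^ 2 * ρ x₀ * ∑ k, ψ k x₀ ^ 2 ≤
      -(ρ x₀ * ∑ k, ψ k x₀ * F k x₀) -
        (ρ x₀ * laplacian2 ρ x₀ - 2 * ‖gradient ρ x₀‖ ^ 2) / (2 * ρ x₀) *
          ∑ k, ψ k x₀ ^ 2 := by
  rw [laplacian2_eq_coordLaplacian] at heq ⊢
  set S : EuclideanSpace ℝ (Fin 2) → ℝ := fun y => ∑ k, ψ k y ^ 2 with hSdef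
  have hS : ContDiff ℝ 2 S := ContDiff.sum fun k _ => (hψ k).pow 2
  have hΦmax : IsLocalMax (fun y => ρ y * S y) x₀ := Filter.Eventually.of_forall hmax
  have hcrit := hΦmax.mul_inner_gradient_eq (hρ.differentiable two_ne_zero x₀)
    (hS.differentiable two_ne_zero x₀)
  have hΔΦ := hΦmax.coordLaplacian_nonpos (hρ.mul hS)
  rw [coordLaplacian_mul hρ hS] at hΔΦ
  have hΔS : 2 * (m ^ 2 * S x₀ + ∑ k, ψ k x₀ * F k x₀) ≤ coordLaplacian S x₀ := by
    refine le_trans ?_ (two_mul_sum_mul_coordLaplacian_le _ (fun k _ => hψ k) x₀)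
    rw [hSdef, Finset.mul_sum, ← Finset.sum_add_distrib]
    gcongr with k
    have hlap : coordLaplacian (ψ k) x₀ = (m ^ 2 + lam k) * ψ k x₀ + F k x₀ := by
      linarith [heq k x₀]
    rw [hlap]
    nlinarith [mul_nonneg (hlam k) (sq_nonneg (ψ k x₀))]
  have hr := hρpos x₀
  rw [div_mul_eq_mul_div, le_sub_iff_add_le, ← le_sub_iff_add_le', div_le_iff₀ (by positivity)]
  nlinarith [mul_le_mul_of_nonneg_left hΔS (sq_nonneg (ρ x₀))]

/-- Weighted maximum-principle estimate for the Galerkin system: if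
`−Δψᵏ + (m² + λ_k)ψᵏ + F_k = 0` and the weighted squared norm `Ψ² = ρ·Σ(ψᵏ)²` attains a
global maximum at `x₀`, then
`m² ρ(x₀) Σ(ψᵏ(x₀))² ≤ −ρ(x₀) Σψᵏ(x₀)F_k(x₀) − (ρΔρ − 2‖∇ρ‖²)/(2ρ)·Σ(ψᵏ(x₀))²`. -/
theorem weighted_maximum_principle
    (n : ℕ) (hn : 1 ≤ n) (m : ℝ) (hm : 0 < m)
    (lam : Fin n → ℝ) (hlam : ∀ k, 0 ≤ lam k)
    (ψ : Fin n → EuclideanSpace ℝ (Fin 2) → ℝ) (hψ : ∀ k, ContDiff ℝ 2 (ψ k))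
    (F : Fin n → EuclideanSpace ℝ (Fin 2) → ℝ)
    (heq : ∀ k x, -laplacian2 (ψ k) x + (m ^ 2 + lam k) * ψ k x + F k x = 0)
    (ρ : EuclideanSpace ℝ (Fin 2) → ℝ) (hρ : ContDiff ℝ 2 ρ) (hρpos : ∀ x, 0 < ρ x)
    (x₀ : EuclideanSpace ℝ (Fin 2))
    (hmax : ∀ x, ρ x * ∑ k, ψ k x ^ 2 ≤ ρ x₀ * ∑ k, ψ k x₀ ^ 2) :
    m ^ 2 * ρ x₀ * ∑ k, ψ k x₀ ^ 2 ≤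
      -(ρ x₀ * ∑ k, ψ k x₀ * F k x₀) -
        (ρ x₀ * laplacian2 ρ x₀ - 2 * ‖gradient ρ x₀‖ ^ 2) / (2 * ρ x₀) *
          ∑ k, ψ k x₀ ^ 2 :=
  weighted_maximum_principle_general n m lam hlam ψ hψ F heq ρ hρ hρpos x₀ hmax
end
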